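/- arXiv:1006.2240 — 7 statements merged into one kernel-verified Lean document; each statement's English description precedes it below -/
import Mathlib

section
/- Let L be a Lie algebra over a field F such that the abelianization L/L² is finite-dimensional, and let h: L × L → L⊗L be a universal Lie pairing. Then L□L is a direct factor of L⊗L: there exists a Lie ideal W of L⊗L such that L⊗L is the internal direct sum of L□L and W, and consequently L⊗L ≅ (L□L) × (L∧L) as Lie algebras. -/
/-!
For `m ∈ L²` the Lie pairing relations give `m ⊗ m = 0` and `l ⊗ m + m ⊗ l = 0`, so the quadratic
map `l ↦ l ⊗ l` into `L□L` factors through the vector space `L/L²`. Every quadratic map on a free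
module is the diagonal of a (not necessarily symmetric) bilinear map, so `l ⊗ l = B(l̄, l̄)` for
some bilinear `B : L/L² × L/L² → L□L`. Since `L□L` is abelian and `B` kills commutators,
`(l, l') ↦ B(l̄, l̄')` is a Lie pairing; the induced homomorphism `L⊗L → L□L` fixes every `l ⊗ l`,
hence is a retraction onto `L□L`, and its kernel is a complementary ideal.
-/

universe u v w x

/-- A Lie pairing `ρ : L × L → H` of Lie algebras over a field `F`:
a bilinear map satisfying the three Lie-pairing relations. -/
structure IsLiePairing (F : Type u) [Field F] {L : Type v} {H : Type w}
    [LieRing L] [LieAlgebra F L] [LieRing H] [LieAlgebra F H]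
    (ρ : L → L → H) : Prop where
  add_left : ∀ l l' k : L, ρ (l + l') k = ρ l k + ρ l' k
  add_right : ∀ l k k' : L, ρ l (k + k') = ρ l k + ρ l k'
  smul_left : ∀ (c : F) (l k : L), ρ (c • l) k = c • ρ l k
  smul_right : ∀ (c : F) (l k : L), ρ l (c • k) = c • ρ l k
  bracket_left : ∀ l l' s : L, ρ ⁅l, l'⁆ s = ρ l ⁅l', s⁆ - ρ l' ⁅l, s⁆
  bracket_right : ∀ l s s' : L, ρ l ⁅s, s'⁆ = ρ ⁅s', l⁆ s - ρ ⁅s, l⁆ s'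
  bracket_bracket : ∀ l s l' s' : L, ρ ⁅l, s⁆ ⁅l', s'⁆ = -⁅ρ s l, ρ l' s'⁆

/-- `h : L × L → T` is a universal Lie pairing: `T` plays the role of the
nonabelian tensor square `L ⊗ L`, with `h l l' = l ⊗ l'`. -/
structure IsUniversalLiePairing (F : Type u) [Field F] (L : Type v) (T : Type w)
    [LieRing L] [LieAlgebra F L] [LieRing T] [LieAlgebra F T]
    (h : L → L → T) : Prop where
  isLiePairing : IsLiePairing F h
  universal : ∀ (Q : Type (max u v w)) [LieRing Q] [LieAlgebra F Q]
      (h' : L → L → Q), IsLiePairing F h' →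
        ∃! ζ : T →ₗ⁅F⁆ Q, ∀ x y : L, ζ (h x y) = h' x y

/-- The product of two Lie rings is a Lie ring. -/
instance prodLieRing (A : Type u) (B : Type v) [LieRing A] [LieRing B] :
    LieRing (A × B) where
  bracket x y := (⁅x.1, y.1⁆, ⁅x.2, y.2⁆)
  add_lie x y z := by simp [Prod.ext_iff, add_lie]
  lie_add x y z := by simp [Prod.ext_iff, lie_add]
  lie_self x := by simp [Prod.ext_iff]
  leibniz_lie x y z := by simp [Prod.ext_iff]

/-- The product of two Lie algebras is a Lie algebra. -/
instance prodLieAlgebra (F : Type x) [Field F] (A : Type u) (B : Type v)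
    [LieRing A] [LieRing B] [LieAlgebra F A] [LieAlgebra F B] :
    LieAlgebra F (A × B) where
  lie_smul t x y := Prod.ext (lie_smul t x.1 y.1) (lie_smul t x.2 y.2)

namespace QuadraticMap

variable {R M N : Type*} [CommRing R] [AddCommGroup M] [Module R M] [AddCommGroup N] [Module R N]

def codRestrict (Q : QuadraticMap R M N) (S : Submodule R N) (hS : ∀ x, Q x ∈ S) :
    QuadraticMap R M S where
  toFun x := ⟨Q x, hS x⟩
  toFun_smul a x := Subtype.ext (Q.map_smul a x)
  exists_companion' :=
    ⟨(polarBilin Q).codRestrict₂ S.subtype S.injective_subtype fun x y => by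
        simpa [polar] using sub_mem (sub_mem (hS (x + y)) (hS x)) (hS y),
      fun x y => Subtype.ext <| by
        change Q (x + y) = Q x + Q y + S.subtype _
        rw [LinearMap.codRestrict₂_apply, polarBilin_apply_apply, polar]
        abel⟩

end QuadraticMap

namespace LieIdeal

variable {R L : Type*} [CommRing R] [LieRing L] [LieAlgebra R L]

theorem isLieAbelian_of_toSubmodule_eq_span (I : LieIdeal R L) {s : Set L}
    (hI : (I : Submodule R L) = Submodule.span R s)
    (hs : ∀ x ∈ s, ∀ y ∈ s, ⁅x, y⁆ = 0) : IsLieAbelian I := by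
  rw [LieSubmodule.lie_abelian_iff_lie_self_eq_bot, LieSubmodule.lie_eq_bot_iff]
  intro x hx y hy
  rw [← LieSubmodule.mem_toSubmodule, ← LieIdeal.toLieSubalgebra_toSubmodule, hI] at hx hy
  induction hx, hy using Submodule.span_induction₂ with
  | mem_mem x y hx hy => exact hs x hx y hy
  | zero_left => exact zero_lie _
  | zero_right => exact lie_zero _
  | add_left x y z _ _ _ hxz hyz => rw [add_lie, hxz, hyz, add_zero]
  | add_right x y z _ _ _ hxy hxz => rw [lie_add, hxy, hxz, add_zero]
  | smul_left c x y _ _ hxy => rw [smul_lie, hxy, smul_zero]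
  | smul_right c x y _ _ hxy => rw [lie_smul, hxy, smul_zero]

def quotientMk (I : LieIdeal R L) : L →ₗ⁅R⁆ L ⧸ I :=
  { LieSubmodule.Quotient.mk' I with map_lie' := rfl }

theorem quotientMk_lie_top_apply_lie (a b : L) :
    quotientMk ⁅(⊤ : LieIdeal R L), (⊤ : LieIdeal R L)⁆ ⁅a, b⁆ = 0 :=
  (LieSubmodule.Quotient.mk_eq_zero' (N := ⁅(⊤ : LieIdeal R L), (⊤ : LieIdeal R L)⁆)).mpr
    (LieSubmodule.lie_mem_lie (LieSubmodule.mem_top a) (LieSubmodule.mem_top b))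

variable {I : LieIdeal R L} {p : L →ₗ⁅R⁆ I}

theorem inf_ker_eq_bot_of_retraction (hp : ∀ x : I, p x = x) : I ⊓ p.ker = ⊥ := by
  refine (LieSubmodule.eq_bot_iff _).mpr fun x ⟨hxI, hxp⟩ => ?_
  simpa [hp ⟨x, hxI⟩] using (LieHom.mem_ker.mp hxp)

theorem sup_ker_eq_top_of_retraction (hp : ∀ x : I, p x = x) : I ⊔ p.ker = ⊤ := by
  refine eq_top_iff.mpr fun x _ =>
    (LieSubmodule.mem_sup _ _ _).mpr ⟨p x, (p x).2, x - p x, ?_, by abel⟩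
  rw [LieHom.mem_ker, map_sub, hp, sub_self]

theorem bijective_prod_quotientMk_of_retraction (hp : ∀ x : I, p x = x) :
    Function.Bijective (p.prod (quotientMk I)) := by
  constructor
  · refine (injective_iff_map_eq_zero _).mpr fun x hx => ?_
    obtain ⟨hpx, hx⟩ := Prod.ext_iff.mp hx
    have hxI : x ∈ I := (LieSubmodule.Quotient.mk_eq_zero' (N := I)).mp hx
    simpa [hp ⟨x, hxI⟩] using hpx
  · rintro ⟨z, y⟩
    obtain ⟨x, rfl⟩ := LieSubmodule.Quotient.surjective_mk' I y
    refine ⟨x - p x + z, Prod.ext ?_ ?_⟩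
    · simp [hp]
    · refine (Submodule.Quotient.eq _).mpr ?_
      rw [show x - p x + z - x = z - p x by abel]
      exact sub_mem z.2 (p x).2

noncomputable def equivProdQuotientOfRetraction (hp : ∀ x : I, p x = x) :
    L ≃ₗ⁅R⁆ I × (L ⧸ I) :=
  LieEquiv.ofBijective _ (bijective_prod_quotientMk_of_retraction hp)

end LieIdeal

namespace IsLiePairing

variable {F L H : Type*} [Field F] [LieRing L] [LieAlgebra F L] [LieRing H] [LieAlgebra F H]
  {ρ : L → L → H} (hρ : IsLiePairing F ρ)
include hρ

def toBilinMap : LinearMap.BilinMap F L H :=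
  LinearMap.mk₂ F ρ hρ.add_left hρ.smul_left hρ.add_right hρ.smul_right

@[simp]
theorem toBilinMap_apply (a b : L) : hρ.toBilinMap a b = ρ a b := rfl

theorem comp_lieHom {H' : Type*} [LieRing H'] [LieAlgebra F H'] (f : H →ₗ⁅F⁆ H') :
    IsLiePairing F (fun a b => f (ρ a b)) where
  add_left l l' k := by rw [hρ.add_left, map_add]
  add_right l k k' := by rw [hρ.add_right, map_add]
  smul_left c l k := by rw [hρ.smul_left, map_smul]
  smul_right c l k := by rw [hρ.smul_right, map_smul]
  bracket_left l l' s := by rw [hρ.bracket_left, map_sub]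
  bracket_right l s s' := by rw [hρ.bracket_right, map_sub]
  bracket_bracket l s l' s' := by rw [hρ.bracket_bracket, map_neg, LieHom.map_lie]

theorem zero_left (b : L) : ρ 0 b = 0 :=
  hρ.toBilinMap.map_zero₂ b

theorem neg_left (a b : L) : ρ (-a) b = -ρ a b :=
  hρ.toBilinMap.map_neg₂ a b

theorem lie_apply (a b c d : L) : ⁅ρ a b, ρ c d⁆ = ρ ⁅a, b⁆ ⁅c, d⁆ := by
  rw [← neg_neg ⁅ρ a b, ρ c d⁆, ← hρ.bracket_bracket, ← lie_skew, hρ.neg_left, neg_neg]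

theorem apply_lie_self (a b : L) : ρ ⁅a, b⁆ ⁅a, b⁆ = 0 := by
  rw [← hρ.lie_apply, lie_self]

theorem apply_add_apply_swap_lie (l a b : L) : ρ l ⁅a, b⁆ + ρ ⁅a, b⁆ l = 0 := by
  have h := hρ.bracket_left l a b
  rw [hρ.bracket_right a l b] at h
  have hs : ρ ⁅b, a⁆ l = -ρ ⁅a, b⁆ l := by rw [← lie_skew a b, hρ.neg_left, neg_neg]
  linear_combination (norm := module) hs - h

theorem apply_add_apply_swap_eq_zero_of_mem (l : L) {m : L}
    (hm : m ∈ ⁅(⊤ : LieIdeal F L), (⊤ : LieIdeal F L)⁆) : ρ l m + ρ m l = 0 := by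
  rw [← LieSubmodule.mem_toSubmodule, LieSubmodule.lieIdeal_oper_eq_linear_span'] at hm
  refine Submodule.span_le (p := LinearMap.ker (hρ.toBilinMap l + hρ.toBilinMap.flip l)).mpr
    ?_ hm
  rintro _ ⟨a, -, b, -, rfl⟩
  simpa using hρ.apply_add_apply_swap_lie l a b

theorem apply_self_eq_zero_of_mem {m : L} (hm : m ∈ ⁅(⊤ : LieIdeal F L), (⊤ : LieIdeal F L)⁆) :
    ρ m m = 0 := by
  rw [← LieSubmodule.mem_toSubmodule, LieSubmodule.lieIdeal_oper_eq_linear_span'] at hm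
  induction hm using Submodule.span_induction with
  | mem _ hx =>
    obtain ⟨a, -, b, -, rfl⟩ := hx
    exact hρ.apply_lie_self a b
  | zero => exact hρ.zero_left 0
  | add x y hx hy ihx ihy =>
    have hy' : y ∈ ⁅(⊤ : LieIdeal F L), (⊤ : LieIdeal F L)⁆ := by
      rwa [← LieSubmodule.mem_toSubmodule, LieSubmodule.lieIdeal_oper_eq_linear_span']
    rw [hρ.add_left, hρ.add_right, hρ.add_right, ihx, ihy, add_zero, zero_add,
      hρ.apply_add_apply_swap_eq_zero_of_mem x hy']
  | smul c x hx ihx =>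
    rw [hρ.smul_left, hρ.smul_right, ihx, smul_zero, smul_zero]

theorem apply_add_self_of_mem (l : L) {m : L}
    (hm : m ∈ ⁅(⊤ : LieIdeal F L), (⊤ : LieIdeal F L)⁆) : ρ (l + m) (l + m) = ρ l l := by
  rw [hρ.add_left, hρ.add_right, hρ.add_right, hρ.apply_self_eq_zero_of_mem hm, add_zero,
    add_assoc, hρ.apply_add_apply_swap_eq_zero_of_mem l hm, add_zero]

theorem exists_bilinMap_quotient_lie_top_diag (S : Submodule F H) (hS : ∀ l, ρ l l ∈ S) :
    ∃ B : LinearMap.BilinMap F (L ⧸ ⁅(⊤ : LieIdeal F L), (⊤ : LieIdeal F L)⁆) S,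
      ∀ l, (B (LieIdeal.quotientMk _ l) (LieIdeal.quotientMk _ l) : H) = ρ l l := by
  set K := ⁅(⊤ : LieIdeal F L), (⊤ : LieIdeal F L)⁆
  obtain ⟨s, hs⟩ := (LieIdeal.quotientMk K : L →ₗ[F] L ⧸ K).exists_rightInverse_of_surjective
    (LinearMap.range_eq_top.mpr (LieSubmodule.Quotient.surjective_mk' K))
  obtain ⟨B, hB⟩ := LinearMap.BilinMap.toQuadraticMap_surjective
    ((hρ.toBilinMap.toQuadraticMap.codRestrict S hS).comp s)
  refine ⟨B, fun l => ?_⟩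
  have hsl : s (LieIdeal.quotientMk K l) - l ∈ K := by
    rw [← LieSubmodule.Quotient.mk_eq_zero, map_sub, sub_eq_zero]
    exact LinearMap.congr_fun hs (LieIdeal.quotientMk K l)
  rw [← LinearMap.BilinMap.toQuadraticMap_apply, hB]
  change ρ (s _) (s _) = ρ l l
  rw [← add_sub_cancel l (s _), hρ.apply_add_self_of_mem l hsl]

end IsLiePairing

theorem isLiePairing_of_bilinMap_quotient_lie_top {F L A : Type*} [Field F] [LieRing L]
    [LieAlgebra F L] [LieRing A] [LieAlgebra F A] [IsLieAbelian A]
    (B : LinearMap.BilinMap F (L ⧸ ⁅(⊤ : LieIdeal F L), (⊤ : LieIdeal F L)⁆) A) :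
    IsLiePairing F fun a b =>
      B (LieIdeal.quotientMk _ a) (LieIdeal.quotientMk _ b) where
  add_left l l' k := by simp
  add_right l k k' := by simp
  smul_left c l k := by simp
  smul_right c l k := by simp
  bracket_left l l' s := by
    simp only [LieIdeal.quotientMk_lie_top_apply_lie, map_zero, LinearMap.zero_apply, sub_self]
  bracket_right l s s' := by
    simp only [LieIdeal.quotientMk_lie_top_apply_lie, map_zero, LinearMap.zero_apply, sub_self]
  bracket_bracket l s l' s' := by
    simp only [LieIdeal.quotientMk_lie_top_apply_lie, map_zero, trivial_lie_zero, neg_zero]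

theorem IsUniversalLiePairing.exists_lieHom {F : Type u} {L : Type v} {T : Type w} [Field F]
    [LieRing L] [LieAlgebra F L] [LieRing T] [LieAlgebra F T] {h : L → L → T}
    (hh : IsUniversalLiePairing F L T h) {Q : Type w} [LieRing Q] [LieAlgebra F Q]
    {ρ : L → L → Q} (hρ : IsLiePairing F ρ) : ∃ ζ : T →ₗ⁅F⁆ Q, ∀ x y, ζ (h x y) = ρ x y := by
  let e : ULift.{max u v} Q ≃ Q := Equiv.ulift
  let := e.lieRing
  let := e.lieAlgebra F
  obtain ⟨ζ, hζ, -⟩ := hh.universal _ _ (hρ.comp_lieHom (e.lieEquiv F).symm.toLieHom)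
  exact ⟨(e.lieEquiv F).toLieHom.comp ζ, fun x y => by simp [hζ]⟩

theorem tensorSquare_isDirectSum_square_exterior_general (F : Type x) [Field F]
    (L : Type v) (T : Type w) [LieRing L] [LieAlgebra F L]
    [LieRing T] [LieAlgebra F T]
    (h : L → L → T) (hh : IsUniversalLiePairing F L T h)
    (sq : LieIdeal F T)
    (hsq : (sq : Submodule F T) = Submodule.span F {z : T | ∃ l : L, z = h l l}) :
    ∃ W : LieIdeal F T, sq ⊓ W = ⊥ ∧ sq ⊔ W = ⊤ ∧
      Nonempty (T ≃ₗ⁅F⁆ sq × (T ⧸ sq)) := by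
  have hρ := hh.isLiePairing
  have hS : ∀ l, h l l ∈ (sq : Submodule F T) := fun l => hsq ▸ Submodule.subset_span ⟨l, rfl⟩
  obtain ⟨B, hB⟩ := hρ.exists_bilinMap_quotient_lie_top_diag _ hS
  have : IsLieAbelian sq := sq.isLieAbelian_of_toSubmodule_eq_span hsq <| by
    rintro _ ⟨l, rfl⟩ _ ⟨m, rfl⟩
    rw [hρ.lie_apply, lie_self, lie_self]
    exact hρ.zero_left 0
  obtain ⟨p, hp⟩ := hh.exists_lieHom
    (isLiePairing_of_bilinMap_quotient_lie_top (A := sq) B)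
  have hret : ∀ z : sq, p z = z := by
    have hgen : Set.EqOn ((sq.incl.comp p : T →ₗ⁅F⁆ T) : T →ₗ[F] T) (LinearMap.id : T →ₗ[F] T)
        {z | ∃ l : L, z = h l l} := by
      rintro _ ⟨l, rfl⟩
      exact (congrArg Subtype.val (hp l l)).trans (hB l)
    intro z
    have hz : (z : T) ∈ Submodule.span F {z | ∃ l : L, z = h l l} := hsq ▸ z.2
    exact Subtype.ext (LinearMap.eqOn_span' hgen hz)
  exact ⟨p.ker, LieIdeal.inf_ker_eq_bot_of_retraction hret,
    LieIdeal.sup_ker_eq_top_of_retraction hret, ⟨LieIdeal.equivProdQuotientOfRetraction hret⟩⟩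

/-- If `L/L²` is finite-dimensional then the square `L□L` is a direct factor
of the tensor square `L⊗L`: there is a Lie ideal `W` with
`L⊗L = L□L ⊕ W` internally, and consequently
`L⊗L ≅ (L□L) × (L∧L)` as Lie algebras (where `L∧L = (L⊗L)/(L□L)`). -/
theorem tensorSquare_isDirectSum_square_exterior (F : Type x) [Field F]
    (L : Type v) (T : Type w) [LieRing L] [LieAlgebra F L]
    [LieRing T] [LieAlgebra F T]
    (h : L → L → T) (hh : IsUniversalLiePairing F L T h)
    [FiniteDimensional F (L ⧸ ⁅(⊤ : LieIdeal F L), (⊤ : LieIdeal F L)⁆)]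
    (sq : LieIdeal F T)
    (hsq : (sq : Submodule F T) = Submodule.span F {z : T | ∃ l : L, z = h l l}) :
    ∃ W : LieIdeal F T, sq ⊓ W = ⊥ ∧ sq ⊔ W = ⊤ ∧
      Nonempty (T ≃ₗ⁅F⁆ sq × (T ⧸ sq)) :=
  tensorSquare_isDirectSum_square_exterior_general F L T h hh sq hsq
end

section
/- Let L be a Lie algebra over a field F such that the abelianization L/L² is finite-dimensional, and let h: L × L → L⊗L be a universal Lie pairing. Then Z∧(L) ∩ L² = Z⊗(L). -/
universe u v w x

/-!
In any Lie pairing `ρ` one has `ρ x d = -ρ d x` and `ρ d d = 0` for `d ∈ L²`, so `m ↦ m ⊗ m`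
is a quadratic map that factors through the abelianization `A = L/L²`. Over a field every
quadratic map on `A` is the diagonal `a ↦ B a a` of a bilinear map `B` (in any characteristic,
via a triangular form in an ordered basis). Every bilinear map on `A` is a Lie pairing into an
abelian Lie algebra, so universality yields a linear `η : L ⊗ L → L ⊗ L` with
`η (x ⊗ y) = B x̄ ȳ`: it fixes every square and kills `l ⊗ l'` for `l ∈ L²`, whence
`l ⊗ l' = η (l ⊗ l') = 0` when `l ∈ L²` and `l ⊗ l'` is in the span of the squares.
Conversely, `B = φ ⊗ φ` with `φ l̄ = 1` shows `l ⊗ l ≠ 0` for `l ∉ L²`.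
-/

namespace IsLiePairing

variable {F : Type u} {L : Type v} {H : Type w}
  [Field F] [LieRing L] [LieAlgebra F L] [LieRing H] [LieAlgebra F H]
  {ρ : L → L → H} (hp : IsLiePairing F ρ)
include hp

def toLinearMap₂ : L →ₗ[F] L →ₗ[F] H :=
  LinearMap.mk₂ F ρ hp.add_left hp.smul_left hp.add_right hp.smul_right

@[simp] lemma toLinearMap₂_apply (x y : L) : hp.toLinearMap₂ x y = ρ x y := rfl

lemma apply_lie_swap_right (y a b : L) : ρ y ⁅b, a⁆ = -ρ y ⁅a, b⁆ := by
  rw [← lie_skew b a]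
  exact map_neg (hp.toLinearMap₂ y) _

lemma apply_lie_swap_left (a b y : L) : ρ ⁅b, a⁆ y = -ρ ⁅a, b⁆ y := by
  rw [← lie_skew b a]
  exact LinearMap.map_neg₂ hp.toLinearMap₂ _ y

lemma apply_lie_add_apply_lie_eq_zero (x a b : L) : ρ x ⁅a, b⁆ + ρ ⁅a, b⁆ x = 0 := by
  linear_combination (norm := module) -hp.bracket_right x a b - hp.bracket_left b x a
    + hp.bracket_left a x b + hp.bracket_left a b x + hp.apply_lie_swap_right x a b
    + hp.apply_lie_swap_right a x b - hp.apply_lie_swap_right b x a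

lemma apply_add_apply_eq_zero_of_mem_derived {d : L}
    (hd : d ∈ ⁅(⊤ : LieIdeal F L), (⊤ : LieIdeal F L)⁆) (x : L) :
    ρ x d + ρ d x = 0 := by
  suffices h_ker : (⁅(⊤ : LieIdeal F L), (⊤ : LieIdeal F L)⁆ : LieIdeal F L).toSubmodule ≤
      LinearMap.ker (hp.toLinearMap₂.flip + hp.toLinearMap₂) from
    LinearMap.congr_fun (h_ker hd) x
  rw [LieSubmodule.lieIdeal_oper_eq_linear_span', Submodule.span_le]
  rintro _ ⟨a, -, b, -, rfl⟩
  ext x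
  exact hp.apply_lie_add_apply_lie_eq_zero x a b

lemma apply_self_eq_zero_of_mem_derived {d : L}
    (hd : d ∈ ⁅(⊤ : LieIdeal F L), (⊤ : LieIdeal F L)⁆) : ρ d d = 0 := by
  rw [← LieSubmodule.mem_toSubmodule, LieSubmodule.lieIdeal_oper_eq_linear_span'] at hd
  induction hd using Submodule.span_induction with
  | mem _ h =>
    obtain ⟨a, -, b, -, rfl⟩ := h
    rw [← neg_eq_zero, ← hp.apply_lie_swap_left, hp.bracket_bracket, lie_self, neg_zero]
  | zero => exact map_zero (hp.toLinearMap₂ 0)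
  | add d d' _ hd' h h' =>
    rw [← LieSubmodule.lieIdeal_oper_eq_linear_span', LieSubmodule.mem_toSubmodule] at hd'
    rw [hp.add_left, hp.add_right, hp.add_right, h, h']
    linear_combination (norm := module) hp.apply_add_apply_eq_zero_of_mem_derived hd' d
  | smul c d _ h => rw [hp.smul_left, hp.smul_right, h, smul_zero, smul_zero]

lemma apply_self_eq_of_sub_mem_derived {x y : L}
    (hxy : x - y ∈ ⁅(⊤ : LieIdeal F L), (⊤ : LieIdeal F L)⁆) : ρ x x = ρ y y := by
  obtain ⟨d, hd, rfl⟩ : ∃ d ∈ ⁅(⊤ : LieIdeal F L), (⊤ : LieIdeal F L)⁆, x = y + d :=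
    ⟨x - y, hxy, by abel⟩
  rw [hp.add_left, hp.add_right, hp.add_right, hp.apply_self_eq_zero_of_mem_derived hd]
  linear_combination (norm := module) hp.apply_add_apply_eq_zero_of_mem_derived hd y

end IsLiePairing

def AbelianLie (V : Type x) : Type x := V

namespace AbelianLie

variable {F : Type u} {V : Type x} [Field F] [AddCommGroup V] [Module F V]

instance : AddCommGroup (AbelianLie V) := inferInstanceAs (AddCommGroup V)

instance : Module F (AbelianLie V) := inferInstanceAs (Module F V)

instance : LieRing (AbelianLie V) where
  bracket _ _ := 0
  add_lie _ _ _ := (add_zero 0).symm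
  lie_add _ _ _ := (add_zero 0).symm
  lie_self _ := rfl
  leibniz_lie _ _ _ := (add_zero 0).symm

instance : LieAlgebra F (AbelianLie V) where
  lie_smul c _ _ := (smul_zero c).symm

variable (F V) in
def linearEquiv : V ≃ₗ[F] AbelianLie V := LinearEquiv.refl F V

lemma lie_eq_zero (a b : AbelianLie V) : ⁅a, b⁆ = 0 := rfl

end AbelianLie

section Universal

variable {F : Type u} {L : Type v} {T : Type w}
  [Field F] [LieRing L] [LieAlgebra F L] [LieRing T] [LieAlgebra F T]

lemma isLiePairing_of_abelianization {V : Type x} [AddCommGroup V] [Module F V]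
    (B : (L ⧸ ⁅(⊤ : LieIdeal F L), (⊤ : LieIdeal F L)⁆) →ₗ[F]
      (L ⧸ ⁅(⊤ : LieIdeal F L), (⊤ : LieIdeal F L)⁆) →ₗ[F] V) :
    IsLiePairing F fun x y : L ↦ AbelianLie.linearEquiv F V
      (B (LieSubmodule.Quotient.mk' _ x) (LieSubmodule.Quotient.mk' _ y)) := by
  have mk_lie (a b : L) :
      LieSubmodule.Quotient.mk' ⁅(⊤ : LieIdeal F L), (⊤ : LieIdeal F L)⁆ ⁅a, b⁆ = 0 :=
    (LieSubmodule.Quotient.mk_eq_zero _).mpr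
      (LieSubmodule.lie_mem_lie (LieSubmodule.mem_top a) (LieSubmodule.mem_top b))
  constructor <;> intros <;> simp [mk_lie, AbelianLie.lie_eq_zero]

lemma IsUniversalLiePairing.exists_linearMap_apply_eq {h : L → L → T}
    (hh : IsUniversalLiePairing F L T h) {V : Type (max u v w)} [AddCommGroup V] [Module F V]
    (B : (L ⧸ ⁅(⊤ : LieIdeal F L), (⊤ : LieIdeal F L)⁆) →ₗ[F]
      (L ⧸ ⁅(⊤ : LieIdeal F L), (⊤ : LieIdeal F L)⁆) →ₗ[F] V) :
    ∃ η : T →ₗ[F] V, ∀ x y : L,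
      η (h x y) = B (LieSubmodule.Quotient.mk' _ x) (LieSubmodule.Quotient.mk' _ y) := by
  obtain ⟨ζ, hζ, -⟩ := hh.universal _ _ (isLiePairing_of_abelianization B)
  exact ⟨(AbelianLie.linearEquiv F V).symm.toLinearMap ∘ₗ ζ.toLinearMap, fun x y ↦ by
    simp [hζ]⟩

end Universal

namespace IsUniversalLiePairing

variable {F : Type u} {L : Type v} {T : Type w}
  [Field F] [LieRing L] [LieAlgebra F L] [LieRing T] [LieAlgebra F T]
  {h : L → L → T} (hh : IsUniversalLiePairing F L T h)
include hh

lemma exists_linearMap_fixing_squares :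
    ∃ η : T →ₗ[F] T, (∀ m : L, η (h m m) = h m m) ∧
      ∀ l ∈ ⁅(⊤ : LieIdeal F L), (⊤ : LieIdeal F L)⁆, ∀ l' : L, η (h l l') = 0 := by
  let π := (LieSubmodule.Quotient.mk' ⁅(⊤ : LieIdeal F L), (⊤ : LieIdeal F L)⁆).toLinearMap
  obtain ⟨s, hs⟩ := π.exists_rightInverse_of_surjective
    (LinearMap.range_eq_top.mpr (LieSubmodule.Quotient.surjective_mk' _))
  obtain ⟨B, hB⟩ := LinearMap.BilinMap.toQuadraticMap_surjective
    ((LinearMap.BilinMap.toQuadraticMap hh.isLiePairing.toLinearMap₂).comp s)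
  obtain ⟨η, hη⟩ :=
    hh.exists_linearMap_apply_eq (B.compr₂ (ULift.moduleEquiv (R := F) (M := T)).symm.toLinearMap)
  refine ⟨ULift.moduleEquiv.toLinearMap ∘ₗ η, fun m ↦ ?_, fun l hl l' ↦ ?_⟩
  · have hm : π (m - s (π m)) = 0 := by
      rw [map_sub, ← LinearMap.comp_apply π s, hs, LinearMap.id_apply, sub_self]
    have hB_m := DFunLike.congr_fun hB (π m)
    simp only [LinearMap.BilinMap.toQuadraticMap_apply, QuadraticMap.comp_apply,
      IsLiePairing.toLinearMap₂_apply] at hB_m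
    simp only [LinearMap.coe_comp, Function.comp_apply, hη, LinearMap.compr₂_apply]
    exact hB_m.trans (hh.isLiePairing.apply_self_eq_of_sub_mem_derived
      ((LieSubmodule.Quotient.mk_eq_zero _).mp hm)).symm
  · simp [hη, LieSubmodule.Quotient.mk_eq_zero'.mpr hl]

lemma mem_derived_of_apply_self_eq_zero {l : L} (hl : h l l = 0) :
    l ∈ ⁅(⊤ : LieIdeal F L), (⊤ : LieIdeal F L)⁆ := by
  rw [← LieSubmodule.Quotient.mk_eq_zero]
  by_contra hne
  obtain ⟨φ, hφ⟩ := Module.Projective.exists_dual_eq_one F hne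
  let B := ((LinearMap.mul F F).compl₁₂ φ φ).compr₂
    (ULift.moduleEquiv.{u, u, max v w}).symm.toLinearMap
  obtain ⟨η, hη⟩ := hh.exists_linearMap_apply_eq B
  have h_one := hη l l
  simp only [B, hl, map_zero, LinearMap.compr₂_apply, LinearMap.compl₁₂_apply,
    LinearMap.mul_apply', hφ] at h_one
  simp [ULift.ext_iff] at h_one

end IsUniversalLiePairing

theorem exteriorCenter_inter_derived_eq_tensorCenter_general (F : Type u) [Field F]
    (L : Type v) (T : Type w) [LieRing L] [LieAlgebra F L]
    [LieRing T] [LieAlgebra F T]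
    (h : L → L → T) (hh : IsUniversalLiePairing F L T h) :
    {l : L | ∀ l' : L, h l l' ∈ Submodule.span F {x : T | ∃ m : L, x = h m m}} ∩
        {l : L | l ∈ ⁅(⊤ : LieIdeal F L), (⊤ : LieIdeal F L)⁆} =
      {l : L | ∀ l' : L, h l l' = 0} := by
  ext l
  refine ⟨fun ⟨hsq, hl⟩ l' ↦ ?_, fun hl ↦ ⟨fun l' ↦ by simp [hl l'], ?_⟩⟩
  · obtain ⟨η, hη_sq, hη_derived⟩ := hh.exists_linearMap_fixing_squares
    have hη_span : Set.EqOn η LinearMap.id (Submodule.span F {x : T | ∃ m : L, x = h m m}) :=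
      LinearMap.eqOn_span' (by rintro _ ⟨m, rfl⟩; exact hη_sq m)
    rw [← LinearMap.id_apply (R := F) (h l l'), ← hη_span (hsq l'), hη_derived l hl l']
  · exact hh.mem_derived_of_apply_self_eq_zero (hl l)

/-- If `L/L²` is finite-dimensional then `Z∧(L) ∩ L² = Z⊗(L)`, where
`Z∧(L) = {l | l∧l' = 0 for all l'}` (i.e. `l⊗l'` lies in the square `L□L`
for every `l'`) and `Z⊗(L) = {l | l⊗l' = 0 for all l'}`. -/
theorem exteriorCenter_inter_derived_eq_tensorCenter (F : Type u) [Field F]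
    (L : Type v) (T : Type w) [LieRing L] [LieAlgebra F L]
    [LieRing T] [LieAlgebra F T]
    (h : L → L → T) (hh : IsUniversalLiePairing F L T h)
    [FiniteDimensional F (L ⧸ ⁅(⊤ : LieIdeal F L), (⊤ : LieIdeal F L)⁆)] :
    {l : L | ∀ l' : L, h l l' ∈ Submodule.span F {x : T | ∃ m : L, x = h m m}} ∩
        {l : L | l ∈ ⁅(⊤ : LieIdeal F L), (⊤ : LieIdeal F L)⁆} =
      {l : L | ∀ l' : L, h l l' = 0} :=
  exteriorCenter_inter_derived_eq_tensorCenter_general F L T h hh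
end

section
/- Let L be a Lie algebra over a field F with a free presentation 0 → R → F → L → 0, and let h: L × L → L⊗L be a universal Lie pairing. Then L∧L ≅ F²/[R,F] as Lie algebras. -/
/-
The exterior square is the target of the universal alternating Lie pairing. An alternating Lie
pairing `ρ : L × L → H` is a 2-cocycle of `L` with trivial coefficients, so `φ : F → L` lifts to
the central extension of `L` by `H` defined by `ρ`; its `H`-component `β` satisfies
`β [f, g] = ρ (φ f) (φ g)`, hence restricts to a Lie homomorphism `F² → H` killing `[R, F]`.
For `ρ = ∧` this gives `F²/[R, F] → L ∧ L`. Conversely, `[f, g] mod [R, F]` only depends on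
`φ f` and `φ g`, so it descends to an alternating Lie pairing `L × L → F²/[R, F]`, and the
universal property gives `L ∧ L → F²/[R, F]`. The two maps are mutually inverse on the
generators `l ∧ l'` and on the classes of brackets, which span.
-/

universe u v w x

open LieModule.Cohomology

namespace LieIdeal

variable {R A B : Type*} [CommRing R] [LieRing A] [LieAlgebra R A] [LieRing B] [LieAlgebra R B]
  (I : LieIdeal R A)

def mkQ : A →ₗ⁅R⁆ A ⧸ I :=
  { (I : Submodule R A).mkQ with map_lie' := rfl }

theorem mkQ_surjective : Function.Surjective I.mkQ :=
  LieSubmodule.Quotient.surjective_mk' I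

theorem mkQ_eq_zero {x : A} : I.mkQ x = 0 ↔ x ∈ I :=
  LieSubmodule.Quotient.mk_eq_zero'

def liftQ (f : A →ₗ⁅R⁆ B) (hf : ∀ x ∈ I, f x = 0) : A ⧸ I →ₗ⁅R⁆ B :=
  { (I : Submodule R A).liftQ (f : A →ₗ[R] B) hf with
    map_lie' := by
      rintro ⟨x⟩ ⟨y⟩
      exact f.map_lie x y }

@[simp]
theorem liftQ_mkQ (f : A →ₗ⁅R⁆ B) (hf : ∀ x ∈ I, f x = 0) (x : A) :
    I.liftQ f hf (I.mkQ x) = f x :=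
  rfl

end LieIdeal

section Derived

variable (R : Type*) [CommRing R] {A : Type*} [LieRing A] [LieAlgebra R A]

variable (A) in
abbrev derivedIdeal : LieIdeal R A :=
  ⁅(⊤ : LieIdeal R A), (⊤ : LieIdeal R A)⁆

def derivedBracket (a b : A) : derivedIdeal R A :=
  ⟨⁅a, b⁆, LieSubmodule.lie_mem_lie (LieSubmodule.mem_top a) (LieSubmodule.mem_top b)⟩

@[simp]
theorem derivedBracket_self (a : A) : derivedBracket R a a = 0 :=
  Subtype.ext (lie_self a)

theorem span_range_derivedBracket :
    Submodule.span R (Set.range (Function.uncurry (derivedBracket R (A := A)))) = ⊤ := by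
  apply Submodule.map_injective_of_injective (Submodule.injective_subtype _)
  rw [Submodule.map_span, Submodule.map_top, Submodule.range_subtype, ← Set.range_comp]
  refine Eq.trans ?_ (LieSubmodule.lieIdeal_oper_eq_linear_span' (R := R) (L := A) ⊤ ⊤).symm
  congr 1
  ext z
  simp [derivedBracket]

end Derived

theorem isLiePairing_derivedBracket {F : Type u} [Field F] {A : Type*} [LieRing A]
    [LieAlgebra F A] : IsLiePairing F (derivedBracket F (A := A)) where
  add_left _ _ _ := Subtype.ext (add_lie _ _ _)
  add_right _ _ _ := Subtype.ext (lie_add _ _ _)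
  smul_left _ _ _ := Subtype.ext (smul_lie _ _ _)
  smul_right _ _ _ := Subtype.ext (lie_smul _ _ _)
  bracket_left _ _ _ := Subtype.ext (lie_lie _ _ _)
  bracket_right l s s' := Subtype.ext <| by
    change ⁅l, ⁅s, s'⁆⁆ = ⁅⁅s', l⁆, s⁆ - ⁅⁅s, l⁆, s'⁆
    rw [leibniz_lie l s s', ← lie_skew s' l, ← lie_skew s l, neg_lie, neg_lie, lie_skew]
    abel
  bracket_bracket l s l' s' := Subtype.ext <| by
    change ⁅⁅l, s⁆, ⁅l', s'⁆⁆ = -⁅⁅s, l⁆, ⁅l', s'⁆⁆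
    rw [← lie_skew s l, neg_lie, neg_neg]

namespace IsLiePairing

variable {F : Type u} [Field F] {L : Type v} {H : Type w} [LieRing L] [LieAlgebra F L]
  [LieRing H] [LieAlgebra F H] {ρ : L → L → H} {A : Type*} [LieRing A] [LieAlgebra F A]

def toBilin (hρ : IsLiePairing F ρ) : L →ₗ[F] L →ₗ[F] H :=
  LinearMap.mk₂ F ρ hρ.add_left hρ.smul_left hρ.add_right hρ.smul_right

@[simp]
theorem toBilin_apply (hρ : IsLiePairing F ρ) (a b : L) : hρ.toBilin a b = ρ a b :=
  rfl

theorem comp {H' : Type x} [LieRing H'] [LieAlgebra F H'] (hρ : IsLiePairing F ρ)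
    (g : H →ₗ⁅F⁆ H') : IsLiePairing F (fun a b => g (ρ a b)) where
  add_left l l' k := by rw [hρ.add_left, map_add]
  add_right l k k' := by rw [hρ.add_right, map_add]
  smul_left c l k := by rw [hρ.smul_left, map_smul]
  smul_right c l k := by rw [hρ.smul_right, map_smul]
  bracket_left l l' s := by rw [hρ.bracket_left, map_sub]
  bracket_right l s s' := by rw [hρ.bracket_right, map_sub]
  bracket_bracket l s l' s' := by rw [hρ.bracket_bracket, map_neg, LieHom.map_lie]

theorem lie_eq_of_self_eq_zero (hρ : IsLiePairing F ρ) (hself : ∀ a, ρ a a = 0) (a b c d : L) :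
    ⁅ρ a b, ρ c d⁆ = ρ ⁅a, b⁆ ⁅c, d⁆ := by
  have hskew : ρ b a = -ρ a b := by
    simpa using ((LinearMap.IsAlt.neg (B := hρ.toBilin) hself) a b).symm
  rw [hρ.bracket_bracket, hskew, neg_lie, neg_neg]

def toTwoCocycle (hρ : IsLiePairing F ρ) (hself : ∀ a, ρ a a = 0) :
    twoCocycle F L (TrivialLieModule F L H) :=
  ⟨⟨hρ.toBilin, hself⟩, (mem_twoCocycle_iff_of_trivial _ _ _ _).2 fun x y z => by
    change ρ x ⁅y, z⁆ = ρ ⁅x, y⁆ z + ρ y ⁅x, z⁆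
    rw [hρ.bracket_left]
    abel⟩

theorem exists_linearMap_apply_lie (hρ : IsLiePairing F ρ) (hself : ∀ a, ρ a a = 0)
    {X : Type*} (φ : FreeLieAlgebra F X →ₗ⁅F⁆ L) :
    ∃ β : FreeLieAlgebra F X →ₗ[F] H, ∀ f g, β ⁅f, g⁆ = ρ (φ f) (φ g) := by
  let c := hρ.toTwoCocycle hself
  let e := (LieAlgebra.ofProd c).symm.linearEquiv F
  let π : LieAlgebra.ofTwoCocycle c →ₗ⁅F⁆ L :=
    { (LinearMap.fst F L _).comp e.toLinearMap with
      map_lie' := by simp [LieAlgebra.bracket_ofTwoCocycle, e] }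
  let Ψ := FreeLieAlgebra.lift F fun x => LieAlgebra.ofProd c (φ (FreeLieAlgebra.of F x), 0)
  have hπΨ : π.comp Ψ = φ := FreeLieAlgebra.hom_ext fun x => by
    rw [LieHom.comp_apply, FreeLieAlgebra.lift_of_apply]; rfl
  refine ⟨(LinearMap.snd F L _).comp (e.toLinearMap.comp Ψ.toLinearMap), fun f g => ?_⟩
  change (e (Ψ ⁅f, g⁆)).2 = _
  rw [LieHom.map_lie]
  have hfst (f) : ((LieAlgebra.ofProd c).symm (Ψ f)).1 = φ f := LieHom.congr_fun hπΨ f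
  simp only [e, Equiv.linearEquiv_apply, LieAlgebra.bracket_ofTwoCocycle, Equiv.symm_apply_apply,
    trivial_lie_zero, add_zero, sub_zero, hfst]
  rfl

theorem map_lie_of_mem_derived (hρ : IsLiePairing F ρ) (hself : ∀ a, ρ a a = 0)
    (φ : A →ₗ⁅F⁆ L) {β : A →ₗ[F] H} (hβ : ∀ a b, β ⁅a, b⁆ = ρ (φ a) (φ b)) {x y : A}
    (hx : x ∈ derivedIdeal F A) (hy : y ∈ derivedIdeal F A) :
    β ⁅x, y⁆ = ⁅β x, β y⁆ := by
  rw [← LieSubmodule.mem_toSubmodule, derivedIdeal,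
    LieSubmodule.lieIdeal_oper_eq_linear_span'] at hx hy
  induction hx, hy using Submodule.span_induction₂ with
  | mem_mem x y hx hy =>
    obtain ⟨a, -, b, -, rfl⟩ := hx
    obtain ⟨c, -, d, -, rfl⟩ := hy
    rw [hβ, hβ, hβ, φ.map_lie, φ.map_lie, hρ.lie_eq_of_self_eq_zero hself]
  | zero_left => simp
  | zero_right => simp
  | add_left _ _ _ _ _ _ h₁ h₂ => simp only [add_lie, map_add, h₁, h₂]
  | add_right _ _ _ _ _ _ h₁ h₂ => simp only [lie_add, map_add, h₁, h₂]
  | smul_left _ _ _ _ _ h => simp only [smul_lie, map_smul, h]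
  | smul_right _ _ _ _ _ h => simp only [lie_smul, map_smul, h]

theorem lie_ker_le_ker (hρ : IsLiePairing F ρ) (φ : A →ₗ⁅F⁆ L) {β : A →ₗ[F] H}
    (hβ : ∀ a b, β ⁅a, b⁆ = ρ (φ a) (φ b)) :
    LieSubmodule.toSubmodule (⁅φ.ker, ⊤⁆ : LieIdeal F A) ≤ LinearMap.ker β := by
  rw [LieSubmodule.lieIdeal_oper_eq_linear_span', Submodule.span_le]
  rintro _ ⟨r, hr, a, -, rfl⟩
  rw [SetLike.mem_coe, LinearMap.mem_ker, hβ, φ.mem_ker.1 hr, ← hρ.toBilin_apply,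
    LinearMap.map_zero₂]

theorem exists_lieHom_derived_quotient (hρ : IsLiePairing F ρ) (hself : ∀ a, ρ a a = 0)
    {X : Type*} (φ : FreeLieAlgebra F X →ₗ⁅F⁆ L)
    (J : LieIdeal F (derivedIdeal F (FreeLieAlgebra F X)))
    (hJ : ∀ x ∈ J, (x : FreeLieAlgebra F X) ∈ (⁅φ.ker, ⊤⁆ : LieIdeal F (FreeLieAlgebra F X))) :
    ∃ β : derivedIdeal F (FreeLieAlgebra F X) ⧸ J →ₗ⁅F⁆ H,
      ∀ f g, β (J.mkQ (derivedBracket F f g)) = ρ (φ f) (φ g) := by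
  obtain ⟨β, hβ⟩ := hρ.exists_linearMap_apply_lie hself φ
  let βD : derivedIdeal F (FreeLieAlgebra F X) →ₗ⁅F⁆ H :=
    { β ∘ₗ Submodule.subtype _ with
      map_lie' := fun {x y} => hρ.map_lie_of_mem_derived hself φ hβ x.2 y.2 }
  exact ⟨J.liftQ βD fun x hx => hρ.lie_ker_le_ker φ hβ (hJ x hx), fun f g => hβ f g⟩

theorem exists_factor_of_surjective {p : A → A → H} (hp : IsLiePairing F p) (φ : A →ₗ⁅F⁆ L)
    (hφ : Function.Surjective φ) (hl : ∀ f g, φ f = 0 → p f g = 0)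
    (hr : ∀ f g, φ g = 0 → p f g = 0) :
    ∃ q : L → L → H, IsLiePairing F q ∧ ∀ f g, q (φ f) (φ g) = p f g := by
  obtain ⟨s, hs⟩ := (φ : A →ₗ[F] L).exists_rightInverse_of_surjective (LinearMap.range_eq_top.2 hφ)
  have hφs (f : A) : φ (s (φ f) - f) = 0 := by
    rw [map_sub, show φ (s (φ f)) = φ f from LinearMap.congr_fun hs (φ f), sub_self]
  have hq (f g : A) : p (s (φ f)) (s (φ g)) = p f g := by
    rw [← add_sub_cancel f (s (φ f)), ← add_sub_cancel g (s (φ g))]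
    simp only [hp.add_left, hp.add_right, fun k => hl _ k (hφs f), fun k => hr k _ (hφs g),
      add_zero]
  refine ⟨fun a b => p (s a) (s b), ⟨?_, ?_, ?_, ?_, ?_, ?_, ?_⟩, hq⟩
  · intro l l' k; simp only [map_add, hp.add_left]
  · intro l k k'; simp only [map_add, hp.add_right]
  · intro c l k; simp only [map_smul, hp.smul_left]
  · intro c l k; simp only [map_smul, hp.smul_right]
  · intro l l' k
    obtain ⟨a, rfl⟩ := hφ l
    obtain ⟨b, rfl⟩ := hφ l'
    obtain ⟨c, rfl⟩ := hφ k
    simp only [← φ.map_lie, hq, hp.bracket_left]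
  · intro l k k'
    obtain ⟨a, rfl⟩ := hφ l
    obtain ⟨b, rfl⟩ := hφ k
    obtain ⟨c, rfl⟩ := hφ k'
    simp only [← φ.map_lie, hq, hp.bracket_right]
  · intro l k l' k'
    obtain ⟨a, rfl⟩ := hφ l
    obtain ⟨b, rfl⟩ := hφ k
    obtain ⟨c, rfl⟩ := hφ l'
    obtain ⟨d, rfl⟩ := hφ k'
    simp only [← φ.map_lie, hq, hp.bracket_bracket]

end IsLiePairing

theorem exists_isLiePairing_derived_quotient {F : Type u} [Field F] {L : Type v} [LieRing L]
    [LieAlgebra F L] {A : Type*} [LieRing A] [LieAlgebra F A] (φ : A →ₗ⁅F⁆ L)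
    (hφ : Function.Surjective φ) (J : LieIdeal F (derivedIdeal F A))
    (hJ : ∀ x : derivedIdeal F A,
      (x : A) ∈ (⁅φ.ker, ⊤⁆ : LieIdeal F A) → x ∈ J) :
    ∃ q : L → L → derivedIdeal F A ⧸ J, IsLiePairing F q ∧
      (∀ a, q a a = 0) ∧ Submodule.span F (Set.range (Function.uncurry q)) = ⊤ ∧
      ∀ f g, q (φ f) (φ g) = J.mkQ (derivedBracket F f g) := by
  obtain ⟨q, hq, hqφ⟩ := (isLiePairing_derivedBracket.comp J.mkQ).exists_factor_of_surjective φ hφ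
    (fun f g hf => J.mkQ_eq_zero.2 <| hJ _ <|
      LieSubmodule.lie_mem_lie (φ.mem_ker.2 hf) (LieSubmodule.mem_top g))
    (fun f g hg => J.mkQ_eq_zero.2 <| hJ _ <| by
      change ⁅f, g⁆ ∈ _
      rw [← lie_skew]
      exact neg_mem (LieSubmodule.lie_mem_lie (φ.mem_ker.2 hg) (LieSubmodule.mem_top f)))
  refine ⟨q, hq, fun a => ?_, ?_, hqφ⟩
  · obtain ⟨f, rfl⟩ := hφ a
    rw [hqφ, derivedBracket_self, map_zero]
  · have hrange : Set.range (Function.uncurry q) =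
        Set.range ((J.mkQ : _ →ₗ[F] _) ∘ Function.uncurry (derivedBracket F (A := A))) := by
      rw [← (hφ.prodMap hφ).range_comp]
      congr 1
      ext ⟨f, g⟩
      exact hqφ f g
    rw [hrange, Set.range_comp, Submodule.span_image, span_range_derivedBracket,
      Submodule.map_top, LinearMap.range_eq_top]
    exact J.mkQ_surjective

theorem small_of_span_range_eq_top {R M ι : Type*} [Semiring R] [AddCommMonoid M] [Module R M]
    {v : ι → M} (hv : Submodule.span R (Set.range v) = ⊤) [Small.{w} (ι →₀ R)] : Small.{w} M :=
  small_of_surjective (f := Finsupp.linearCombination R v) <| by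
    rw [← LinearMap.range_eq_top, Finsupp.range_linearCombination, hv]

namespace IsUniversalLiePairing

variable {F : Type u} [Field F] {L : Type v} {T : Type w} [LieRing L] [LieAlgebra F L]
  [LieRing T] [LieAlgebra F T] {h : L → L → T}

theorem existsUnique_lieHom_of_small (hh : IsUniversalLiePairing F L T h) {Q : Type*}
    [LieRing Q] [LieAlgebra F Q] [Small.{max u v w} Q] {q : L → L → Q} (hq : IsLiePairing F q) :
    ∃! ζ : T →ₗ⁅F⁆ Q, ∀ x y, ζ (h x y) = q x y := by
  let e := (equivShrink.{max u v w} Q).symm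
  let := e.lieRing
  let := e.lieAlgebra F
  let E := e.lieEquiv F
  obtain ⟨ζ, hζ, huniq⟩ := hh.universal _ _ (hq.comp E.symm.toLieHom)
  refine ⟨E.toLieHom.comp ζ, fun x y => by simp [hζ], fun ζ' hζ' => ?_⟩
  have := huniq (E.symm.toLieHom.comp ζ') fun x y => by simp [hζ']
  ext t
  simp [← this]

theorem nonempty_quotient_lieEquiv (hh : IsUniversalLiePairing F L T h) (sq : LieIdeal F T)
    (hsq : (sq : Submodule F T) = Submodule.span F {z : T | ∃ l : L, z = h l l})
    {Q : Type*} [LieRing Q] [LieAlgebra F Q] {q : L → L → Q} (hq : IsLiePairing F q)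
    (hq_self : ∀ a, q a a = 0) (hq_span : Submodule.span F (Set.range (Function.uncurry q)) = ⊤)
    (β : Q →ₗ⁅F⁆ T ⧸ sq) (hβ : ∀ a b, β (q a b) = sq.mkQ (h a b)) :
    Nonempty ((T ⧸ sq) ≃ₗ⁅F⁆ Q) := by
  have : Small.{max u v w} Q := small_of_span_range_eq_top hq_span
  have : Small.{max u v w} (T ⧸ sq) := small_max.{max u v} _
  obtain ⟨ζ, hζ, -⟩ := hh.existsUnique_lieHom_of_small hq
  have hζ_sq : ∀ t ∈ sq, ζ t = 0 := by
    intro t ht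
    change t ∈ (sq : Submodule F T) at ht
    rw [hsq] at ht
    refine Submodule.span_le (p := LinearMap.ker (ζ : T →ₗ[F] Q)) |>.2 ?_ ht
    rintro _ ⟨l, rfl⟩
    simp [hζ, hq_self]
  let ζ' := sq.liftQ ζ hζ_sq
  have hβζ : (β.comp ζ').comp sq.mkQ = sq.mkQ :=
    (hh.existsUnique_lieHom_of_small (hh.isLiePairing.comp sq.mkQ)).unique
      (fun x y => by simp [ζ', hζ, hβ]) (fun _ _ => rfl)
  have hζβ : (ζ'.comp β : Q →ₗ[F] Q) = LinearMap.id :=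
    LinearMap.ext_on_range hq_span fun ⟨a, b⟩ => by simp [ζ', hβ, hζ]
  refine ⟨{ ζ' with invFun := β, left_inv := fun m => ?_, right_inv := LinearMap.congr_fun hζβ }⟩
  obtain ⟨t, rfl⟩ := sq.mkQ_surjective m
  exact LieHom.congr_fun hβζ t

end IsUniversalLiePairing

/-- Given a free presentation `0 → R → F → L → 0` of a Lie algebra `L`
(`F` a free Lie algebra, `R = ker (F → L)`), the exterior square
`L∧L = (L⊗L)/(L□L)` is isomorphic to `F²/[R,F]`, where `J = [R,F]` is
regarded as an ideal of the derived subalgebra `F²`. -/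
theorem exteriorSquare_iso_freePresentation (K : Type u) [Field K]
    (L : Type v) [LieRing L] [LieAlgebra K L]
    (T : Type w) [LieRing T] [LieAlgebra K T]
    (h : L → L → T) (hh : IsUniversalLiePairing K L T h)
    (sq : LieIdeal K T)
    (hsq : (sq : Submodule K T) = Submodule.span K {z : T | ∃ l : L, z = h l l})
    (X : Type x) (φ : FreeLieAlgebra K X →ₗ⁅K⁆ L) (hφ : Function.Surjective φ)
    (J : LieIdeal K
      (⁅(⊤ : LieIdeal K (FreeLieAlgebra K X)),
        (⊤ : LieIdeal K (FreeLieAlgebra K X))⁆ :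
          LieIdeal K (FreeLieAlgebra K X)))
    (hJ : ∀ x : (⁅(⊤ : LieIdeal K (FreeLieAlgebra K X)),
        (⊤ : LieIdeal K (FreeLieAlgebra K X))⁆ : LieIdeal K (FreeLieAlgebra K X)),
      x ∈ J ↔ (x : FreeLieAlgebra K X) ∈
        ⁅φ.ker, (⊤ : LieIdeal K (FreeLieAlgebra K X))⁆) :
    Nonempty ((T ⧸ sq) ≃ₗ⁅K⁆
      ((⁅(⊤ : LieIdeal K (FreeLieAlgebra K X)),
        (⊤ : LieIdeal K (FreeLieAlgebra K X))⁆ :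
          LieIdeal K (FreeLieAlgebra K X)) ⧸ J)) := by
  have hwedge := hh.isLiePairing.comp sq.mkQ
  have hwedge_self (l : L) : sq.mkQ (h l l) = 0 := by
    rw [sq.mkQ_eq_zero]
    change h l l ∈ (sq : Submodule K T)
    rw [hsq]
    exact Submodule.subset_span ⟨l, rfl⟩
  obtain ⟨β, hβ⟩ :=
    hwedge.exists_lieHom_derived_quotient hwedge_self φ J fun x hx => (hJ x).1 hx
  obtain ⟨q, hq, hq_self, hq_span, hqφ⟩ :=
    exists_isLiePairing_derived_quotient φ hφ J fun x hx => (hJ x).2 hx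
  refine hh.nonempty_quotient_lieEquiv sq hsq hq hq_self hq_span β fun a b => ?_
  obtain ⟨f, rfl⟩ := hφ a
  obtain ⟨g, rfl⟩ := hφ b
  rw [hqφ, hβ]
end

section
/- Let L be a Lie algebra over a field such that L/L² is finite-dimensional, with universal Lie pairings h: L × L → L⊗L and h̄: (L/L²) × (L/L²) → (L/L²)⊗(L/L²), and let π: L⊗L → (L/L²)⊗(L/L²) be the natural epimorphism. Then the restriction of π to L□L is an isomorphism onto (L/L²)□(L/L²). -/
universe u v w x

section AbLift
variable {M : Type*} [AddCommGroup M]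

/-- The trivial (abelian) Lie ring structure on `ULift M`. -/
instance ULift.instLieRingTrivial : LieRing (ULift.{x} M) :=
  { (inferInstance : AddCommGroup (ULift M)) with
    bracket := fun _ _ => 0
    add_lie := fun _ _ _ => by show (0 : ULift M) = 0 + 0; simp
    lie_add := fun _ _ _ => by show (0 : ULift M) = 0 + 0; simp
    lie_self := fun _ => rfl
    leibniz_lie := fun _ _ _ => by show (0 : ULift M) = 0 + 0; simp }

/-- The trivial Lie algebra structure on `ULift M`. -/
instance ULift.instLieAlgebraTrivial {F : Type u} [Field F] [Module F M] :
    LieAlgebra F (ULift.{x} M) :=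
  { (inferInstance : Module F (ULift M)) with
    lie_smul := fun t _ _ => by show (0 : ULift M) = t • 0; simp }
end AbLift

/-- Auxiliary general version: `I` is any Lie ideal containing all brackets and
contained in the linear span of brackets. -/
theorem square_restriction_aux (F : Type u) [Field F]
    (L : Type v) [LieRing L] [LieAlgebra F L]
    (I : LieIdeal F L)
    (hbr : ∀ y z : L, ⁅y, z⁆ ∈ I)
    (hspan : ∀ d ∈ I, d ∈ Submodule.span F {m : L | ∃ y z : L, ⁅y, z⁆ = m})
    (T : Type w) [LieRing T] [LieAlgebra F T]
    (h : L → L → T) (hh : IsUniversalLiePairing F L T h)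
    (T2 : Type x) [LieRing T2] [LieAlgebra F T2]
    (h2 : (L ⧸ I) → (L ⧸ I) → T2)
    (hh2 : IsUniversalLiePairing F (L ⧸ I) T2 h2)
    (π : T →ₗ⁅F⁆ T2)
    (hπ : ∀ l l' : L, π (h l l') =
      h2 (LieSubmodule.Quotient.mk (N := I) l) (LieSubmodule.Quotient.mk (N := I) l')) :
    Set.InjOn π (Submodule.span F {z : T | ∃ l : L, z = h l l}) ∧
      π '' (Submodule.span F {z : T | ∃ l : L, z = h l l}) =
        (Submodule.span F {z : T2 | ∃ a : L ⧸ I, z = h2 a a} : Set T2) := by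
  classical
  obtain ⟨P, -⟩ := hh
  have h0l : ∀ k : L, h 0 k = 0 := fun k => by
    have := P.smul_left 0 0 k; simpa using this
  have h0r : ∀ k : L, h k 0 = 0 := fun k => by
    have := P.smul_right 0 k 0; simpa using this
  have hnegl : ∀ a k : L, h (-a) k = -h a k := fun a k => by
    have := P.smul_left (-1) a k; simpa using this
  -- the key bracket identity  ⁅h a b, h u v⁆ = h ⁅a,b⁆ ⁅u,v⁆
  have lie_h : ∀ a b u v : L, ⁅h a b, h u v⁆ = h ⁅a, b⁆ ⁅u, v⁆ := by
    intro a b u v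
    have e := P.bracket_bracket b a u v
    have e2 : ⁅b, a⁆ = -⁅a, b⁆ := by rw [← lie_skew]
    rw [e2, hnegl] at e
    exact (neg_injective e).symm
  have kA : ∀ l s : L, h l ⁅s, l⁆ = -h ⁅s, l⁆ l := by
    intro l s
    have := P.bracket_right l s l
    rwa [lie_self, h0l, zero_sub] at this
  have hfxx : ∀ x a : L, h x ⁅a, x⁆ + h ⁅a, x⁆ x = 0 := fun x a => by
    rw [kA]; simp
  have polar : ∀ l a b : L,
      (h l ⁅a, b⁆ + h ⁅a, b⁆ l) + (h b ⁅a, l⁆ + h ⁅a, l⁆ b) = 0 := by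
    intro l a b
    have e := hfxx (l + b) a
    simp only [lie_add, P.add_left, P.add_right, kA] at e
    rw [← e]; abel
  have R : ∀ l a b : L, h l ⁅a, b⁆ + h ⁅a, b⁆ l
      = (h a ⁅b, l⁆ + h ⁅b, l⁆ a) - (h b ⁅a, l⁆ + h ⁅a, l⁆ b) := by
    intro l a b
    rw [P.bracket_right l a b, P.bracket_left a b l]; abel
  have klem : ∀ a b l : L, h a ⁅b, l⁆ + h ⁅b, l⁆ a = 0 := by
    intro a b l
    have h4 : (h a ⁅b, l⁆ + h ⁅b, l⁆ a)
        = (h l ⁅a, b⁆ + h ⁅a, b⁆ l) + (h b ⁅a, l⁆ + h ⁅a, l⁆ b) := by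
      rw [R l a b]; abel
    rw [h4]; exact polar l a b
  -- kappa vanishes on (x, I)
  have kappa_I : ∀ (l d : L), d ∈ I → h l d + h d l = 0 := by
    intro l d hd
    refine Submodule.span_induction ?_ ?_ ?_ ?_ (hspan d hd)
    · rintro m ⟨y, z, rfl⟩
      exact klem l y z
    · rw [h0r, h0l, add_zero]
    · intro d e _ _ hd' he'
      have : h l (d + e) + h (d + e) l = (h l d + h d l) + (h l e + h e l) := by
        rw [P.add_right, P.add_left]; abel
      rw [this, hd', he', add_zero]
    · intro c d _ hd'
      have : h l (c • d) + h (c • d) l = c • (h l d + h d l) := by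
        rw [P.smul_right, P.smul_left, smul_add]
      rw [this, hd', smul_zero]
  -- squares vanish on the span of brackets
  have q_sp : ∀ d : L, d ∈ Submodule.span F {m : L | ∃ y z : L, ⁅y, z⁆ = m} → h d d = 0 := by
    intro d hd
    refine Submodule.span_induction ?_ ?_ ?_ ?_ hd
    · rintro m ⟨y, z, rfl⟩
      rw [← lie_h, lie_self]
    · exact h0l 0
    · intro d e hdm hem hd' he'
      have hde : h (d + e) (d + e) = (h d d + (h d e + h e d)) + h e e := by
        rw [P.add_left, P.add_right, P.add_right]; abel
      have hke : h d e + h e d = 0 := by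
        refine Submodule.span_induction ?_ ?_ ?_ ?_ hem
        · rintro m ⟨y, z, rfl⟩; exact klem d y z
        · rw [h0r, h0l, add_zero]
        · intro a b _ _ ha' hb'
          have : h d (a + b) + h (a + b) d = (h d a + h a d) + (h d b + h b d) := by
            rw [P.add_right, P.add_left]; abel
          rw [this, ha', hb', add_zero]
        · intro c a _ ha'
          have : h d (c • a) + h (c • a) d = c • (h d a + h a d) := by
            rw [P.smul_right, P.smul_left, smul_add]
          rw [this, ha', smul_zero]
      rw [hde, hd', he', hke]; simp
    · intro c d _ hd'
      rw [P.smul_left, P.smul_right, hd', smul_zero, smul_zero]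
  have q_I : ∀ d : L, d ∈ I → h d d = 0 := fun d hd => q_sp d (hspan d hd)
  -- squares depend only on the class mod I
  have q_factor : ∀ l d : L, d ∈ I → h (l + d) (l + d) = h l l := by
    intro l d hd
    have : h (l + d) (l + d) = h l l + ((h l d + h d l) + h d d) := by
      rw [P.add_left, P.add_right, P.add_right]; abel
    rw [this, kappa_I l d hd, q_I d hd, add_zero, add_zero]
  -- a linear section of the quotient map
  obtain ⟨σ, hσ⟩ := (I.toSubmodule.mkQ).exists_rightInverse_of_surjective
    (Submodule.range_mkQ _)
  have hσ' : ∀ a : L ⧸ I, I.toSubmodule.mkQ (σ a) = a := fun a => LinearMap.congr_fun hσ a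
  have hsec : ∀ l : L, h (σ (LieSubmodule.Quotient.mk (N := I) l))
      (σ (LieSubmodule.Quotient.mk (N := I) l)) = h l l := by
    intro l
    set a := LieSubmodule.Quotient.mk (N := I) l with ha
    have hmem : σ a - l ∈ I := by
      have h1 : I.toSubmodule.mkQ (σ a - l) = 0 := by
        rw [map_sub, hσ']
        show a - LieSubmodule.Quotient.mk (N := I) l = 0
        rw [ha, sub_self]
      exact (LieSubmodule.Quotient.mk_eq_zero' (N := I)).mp h1
    have h2 : σ a = l + (σ a - l) := by abel
    rw [h2, q_factor l _ hmem]
  -- the abelianization is abelian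
  have Wab : ∀ a b : L ⧸ I, ⁅a, b⁆ = 0 := by
    intro a b
    obtain ⟨y, rfl⟩ := Submodule.Quotient.mk_surjective I.toSubmodule a
    obtain ⟨z, rfl⟩ := Submodule.Quotient.mk_surjective I.toSubmodule b
    have : LieSubmodule.Quotient.mk (N := I) ⁅y, z⁆ = (0 : L ⧸ I) := by
      rw [LieSubmodule.Quotient.mk_eq_zero']
      exact hbr y z
    rw [← LieSubmodule.Quotient.mk_bracket]
    exact this
  -- the pairing into the trivial Lie algebra on (L/I) ⊗ (L/I)
  have pairing2 : IsLiePairing F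
      (fun a b : L ⧸ I =>
        (ULift.up (a ⊗ₜ[F] b) : ULift.{max u x} (TensorProduct F (L ⧸ I) (L ⧸ I)))) := by
    constructor
    · intro l l' k; apply ULift.ext; exact TensorProduct.add_tmul l l' k
    · intro l k k'; apply ULift.ext; exact TensorProduct.tmul_add l k k'
    · intro c l k; apply ULift.ext
      show (c • l) ⊗ₜ[F] k = (c • ULift.up.{max u x} (l ⊗ₜ[F] k)).down
      rw [ULift.smul_down]
      exact TensorProduct.smul_tmul' c l k
    · intro c l k; apply ULift.ext
      show l ⊗ₜ[F] (c • k) = (c • ULift.up.{max u x} (l ⊗ₜ[F] k)).down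
      rw [ULift.smul_down]
      exact (TensorProduct.tmul_smul c l k)
    · intro l l' s; apply ULift.ext; simp [Wab]
    · intro l s s'; apply ULift.ext; simp [Wab]
    · intro l s l' s'; apply ULift.ext
      show ⁅l, s⁆ ⊗ₜ[F] ⁅l', s'⁆ = (-(0 : ULift.{max u x} (TensorProduct F (L ⧸ I) (L ⧸ I)))).down
      simp [Wab]
  obtain ⟨ζ2, hζ2, -⟩ := hh2.universal _ _ pairing2
  -- the bilinear map back
  have hB : ∃ B : (L ⧸ I) →ₗ[F] (L ⧸ I) →ₗ[F] T, ∀ a b, B a b = h (σ a) (σ b) :=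
    ⟨LinearMap.mk₂ F (fun a b => h (σ a) (σ b))
      (fun a a' b => by simp only [map_add, P.add_left])
      (fun c a b => by simp only [map_smul, P.smul_left])
      (fun a b b' => by simp only [map_add, P.add_right])
      (fun c a b => by simp only [map_smul, P.smul_right]),
      fun a b => rfl⟩
  obtain ⟨B, hB⟩ := hB
  set φ : TensorProduct F (L ⧸ I) (L ⧸ I) →ₗ[F] T := TensorProduct.lift B with hφdef
  set Ψ : ULift.{max u x} (TensorProduct F (L ⧸ I) (L ⧸ I)) →ₗ[F] T :=
    φ.comp (ULift.moduleEquiv :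
      ULift.{max u x} (TensorProduct F (L ⧸ I) (L ⧸ I)) ≃ₗ[F]
        TensorProduct F (L ⧸ I) (L ⧸ I)).toLinearMap with hΨdef
  have hΨ : ∀ a : L ⧸ I, Ψ (ULift.up (a ⊗ₜ[F] a)) = h (σ a) (σ a) := by
    intro a
    show φ (a ⊗ₜ[F] a) = h (σ a) (σ a)
    rw [hφdef, TensorProduct.lift.tmul, hB]
  -- key injectivity statement
  have key : ∀ z, z ∈ Submodule.span F {z : T | ∃ l : L, z = h l l} → π z = 0 → z = 0 := by
    intro z hz hz0
    obtain ⟨n, c, g, hg⟩ := Submodule.mem_span_set'.mp hz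
    have hgl : ∀ i, ∃ l : L, (g i : T) = h l l := fun i => (g i).2
    choose lf hlf using hgl
    have hz' : z = ∑ i, c i • h (lf i) (lf i) := by
      rw [← hg]; exact Finset.sum_congr rfl fun i _ => by rw [hlf]
    have hπz : π z = ∑ i, c i • h2 (LieSubmodule.Quotient.mk (N := I) (lf i))
        (LieSubmodule.Quotient.mk (N := I) (lf i)) := by
      rw [hz']
      show π.toLinearMap (∑ i, c i • h (lf i) (lf i)) = _
      rw [map_sum]
      refine Finset.sum_congr rfl fun i _ => ?_
      rw [map_smul]
      show c i • π (h (lf i) (lf i)) = _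
      rw [hπ]
    have hζπ : (0 : ULift.{max u x} (TensorProduct F (L ⧸ I) (L ⧸ I)))
        = ∑ i, c i • (ULift.up ((LieSubmodule.Quotient.mk (N := I) (lf i)) ⊗ₜ[F]
            (LieSubmodule.Quotient.mk (N := I) (lf i)))) := by
      have h1 : ζ2 (π z) = 0 := by rw [hz0]; exact ζ2.map_zero
      rw [hπz] at h1
      rw [← h1]
      show ζ2.toLinearMap (∑ i, c i • h2 (LieSubmodule.Quotient.mk (N := I) (lf i))
        (LieSubmodule.Quotient.mk (N := I) (lf i))) = _
      rw [map_sum]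
      refine Finset.sum_congr rfl fun i _ => ?_
      rw [map_smul]
      show c i • ζ2 (h2 _ _) = _
      rw [hζ2]
    have h3 := congrArg Ψ hζπ
    rw [map_zero, map_sum] at h3
    have h4 : (0 : T) = ∑ i, c i • h (lf i) (lf i) := by
      rw [h3]
      refine Finset.sum_congr rfl fun i _ => ?_
      rw [map_smul, hΨ, hsec]
    rw [hz', ← h4]
  constructor
  · intro a ha b hb hab
    have hmem : a - b ∈ Submodule.span F {z : T | ∃ l : L, z = h l l} :=
      Submodule.sub_mem _ ha hb
    have hπ0 : π (a - b) = 0 := by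
      show π.toLinearMap (a - b) = 0
      rw [map_sub]
      show π a - π b = 0
      rw [hab, sub_self]
    exact sub_eq_zero.mp (key _ hmem hπ0)
  · have himg : ⇑π '' {z : T | ∃ l : L, z = h l l}
        = {z : T2 | ∃ a : L ⧸ I, z = h2 a a} := by
      ext t; constructor
      · rintro ⟨s, ⟨l, rfl⟩, rfl⟩
        exact ⟨LieSubmodule.Quotient.mk (N := I) l, hπ l l⟩
      · rintro ⟨a, rfl⟩
        obtain ⟨l, rfl⟩ := Submodule.Quotient.mk_surjective I.toSubmodule a
        exact ⟨h l l, ⟨l, rfl⟩, by rw [hπ l l]⟩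
    calc π '' (Submodule.span F {z : T | ∃ l : L, z = h l l})
        = π.toLinearMap '' (Submodule.span F {z : T | ∃ l : L, z = h l l}) := rfl
      _ = (Submodule.map π.toLinearMap (Submodule.span F {z : T | ∃ l : L, z = h l l}) : Set T2) :=
          (Submodule.map_coe _ _).symm
      _ = (Submodule.span F (π.toLinearMap '' {z : T | ∃ l : L, z = h l l}) : Set T2) := by
          rw [Submodule.map_span]
      _ = _ := by
          show (Submodule.span F (⇑π '' {z : T | ∃ l : L, z = h l l}) : Set T2) = _
          rw [himg]

/-- If `L` is a Lie algebra whose abelianization `L/L²` is finite-dimensional and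
`π : L⊗L → (L/L²)⊗(L/L²)` is the natural epimorphism, then the restriction
of `π` to the square `L□L` is an isomorphism onto `(L/L²)□(L/L²)`. -/
theorem square_restriction_isomorphism_of_finiteDimensional_abelianization (F : Type u) [Field F]
    (L : Type v) [LieRing L] [LieAlgebra F L] [FiniteDimensional F (L ⧸ ⁅(⊤ : LieIdeal F L), (⊤ : LieIdeal F L)⁆)]
    (T : Type w) [LieRing T] [LieAlgebra F T]
    (h : L → L → T) (hh : IsUniversalLiePairing F L T h)
    (T2 : Type x) [LieRing T2] [LieAlgebra F T2]
    (h2 : (L ⧸ ⁅(⊤ : LieIdeal F L), (⊤ : LieIdeal F L)⁆) →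
      (L ⧸ ⁅(⊤ : LieIdeal F L), (⊤ : LieIdeal F L)⁆) → T2)
    (hh2 : IsUniversalLiePairing F
      (L ⧸ ⁅(⊤ : LieIdeal F L), (⊤ : LieIdeal F L)⁆) T2 h2)
    (π : T →ₗ⁅F⁆ T2)
    (hπ : ∀ l l' : L, π (h l l') =
      h2 (LieSubmodule.Quotient.mk (N := ⁅(⊤ : LieIdeal F L), (⊤ : LieIdeal F L)⁆) l)
         (LieSubmodule.Quotient.mk (N := ⁅(⊤ : LieIdeal F L), (⊤ : LieIdeal F L)⁆) l')) :
    Set.InjOn π (Submodule.span F {z : T | ∃ l : L, z = h l l}) ∧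
      π '' (Submodule.span F {z : T | ∃ l : L, z = h l l}) =
        (Submodule.span F
          {z : T2 | ∃ a : L ⧸ ⁅(⊤ : LieIdeal F L), (⊤ : LieIdeal F L)⁆,
            z = h2 a a} : Set T2) := by
  refine square_restriction_aux F L ⁅(⊤ : LieIdeal F L), (⊤ : LieIdeal F L)⁆ ?_ ?_
    T h hh T2 h2 hh2 π hπ
  · intro y z
    exact LieSubmodule.lie_mem_lie (LieSubmodule.mem_top y) (LieSubmodule.mem_top z)
  · intro d hd
    have h1 : d ∈ Submodule.span F
        {m : L | ∃ (x : (⊤ : LieIdeal F L)) (n : (⊤ : LieSubmodule F L L)),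
          ⁅(x : L), (n : L)⁆ = m} := by
      rw [← LieSubmodule.lieIdeal_oper_eq_linear_span]
      exact hd
    refine Submodule.span_mono ?_ h1
    rintro m ⟨y, z, rfl⟩
    exact ⟨y, z, rfl⟩
end

section
/- Let L be a Lie algebra over a field such that the abelianization L/L² is finite-dimensional, and let h: L × L → L⊗L be a universal Lie pairing. Then the submodule L□L is finite-dimensional. -/
universe u v w x

namespace LiePairingAux

variable {F : Type u} [Field F] {L : Type v} {T : Type w}
  [LieRing L] [LieAlgebra F L] [LieRing T] [LieAlgebra F T]
  {h : L → L → T} (P : IsLiePairing F h)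
include P

lemma neg_right (x y : L) : h x (-y) = - h x y := by
  rw [← neg_one_smul F y, P.smul_right, neg_one_smul]

lemma neg_left (x y : L) : h (-x) y = - h x y := by
  rw [← neg_one_smul F x, P.smul_left, neg_one_smul]

lemma zero_right (x : L) : h x 0 = 0 := by
  have := P.smul_right 0 x 0
  simpa using this

lemma zero_left (x : L) : h 0 x = 0 := by
  have := P.smul_left 0 0 x
  simpa using this

lemma star (l a b : L) : h l ⁅a, b⁆ = h a ⁅l, b⁆ - h b ⁅l, a⁆ := by
  have e1 := P.bracket_right l a b
  have e2 := P.bracket_left b l a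
  have e3 := P.bracket_left a l b
  have e4 : h l ⁅b, a⁆ = -h l ⁅a, b⁆ := by rw [← lie_skew a b, neg_right P, neg_neg]
  rw [e2, e3, e4] at e1
  linear_combination (norm := abel) -e1

lemma sym_bracket (l a b : L) : h l ⁅a, b⁆ + h ⁅a, b⁆ l = 0 := by
  have e1 := star P l a b
  have e2 := P.bracket_left a b l
  have e3 : h a ⁅b, l⁆ = - h a ⁅l, b⁆ := by rw [← lie_skew l b, neg_right P, neg_neg]
  have e4 : h b ⁅a, l⁆ = - h b ⁅l, a⁆ := by rw [← lie_skew l a, neg_right P, neg_neg]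
  rw [e3, e4] at e2
  linear_combination (norm := abel) e1 + e2

lemma q_bracket (a b : L) : h ⁅a, b⁆ ⁅a, b⁆ = 0 := by
  have e1 := P.bracket_bracket b a a b
  rw [lie_self, neg_zero] at e1
  have e2 : h ⁅b, a⁆ ⁅a, b⁆ = - h ⁅a, b⁆ ⁅a, b⁆ := by
    rw [← lie_skew a b, neg_left P, neg_neg]
  rw [e2] at e1
  linear_combination (norm := abel) -e1

lemma sym_ideal (m : L)
    (hm : m ∈ Submodule.span F {z : L | ∃ x y : L, ⁅x, y⁆ = z}) (l : L) :
    h l m + h m l = 0 := by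
  induction hm using Submodule.span_induction with
  | mem z hz => obtain ⟨x, y, rfl⟩ := hz; exact sym_bracket P l x y
  | zero => rw [zero_left P, zero_right P, add_zero]
  | add x y _ _ ihx ihy =>
      rw [P.add_right, P.add_left]
      linear_combination (norm := abel) ihx + ihy
  | smul c x _ ih =>
      rw [P.smul_right, P.smul_left, ← smul_add, ih, smul_zero]

lemma q_ideal (m : L)
    (hm : m ∈ Submodule.span F {z : L | ∃ x y : L, ⁅x, y⁆ = z}) :
    h m m = 0 := by
  induction hm using Submodule.span_induction with
  | mem z hz => obtain ⟨x, y, rfl⟩ := hz; exact q_bracket P x y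
  | zero => exact zero_left P 0
  | add x y hx hy ihx ihy =>
      rw [P.add_left, P.add_right, P.add_right]
      have s1 := sym_ideal P y hy x
      linear_combination (norm := abel) ihx + ihy + s1
  | smul c x _ ih =>
      rw [P.smul_left, P.smul_right, ih, smul_zero, smul_zero]

end LiePairingAux

/-- If the abelianization `L/L²` is finite-dimensional then the square `L□L`
(the submodule of the tensor square `L⊗L` spanned by the `l⊗l`) is
finite-dimensional. -/


theorem square_finiteDimensional (F : Type u) [Field F] (L : Type v) (T : Type w)
    [LieRing L] [LieAlgebra F L] [LieRing T] [LieAlgebra F T]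
    (h : L → L → T) (hh : IsUniversalLiePairing F L T h)
    [FiniteDimensional F (L ⧸ ⁅(⊤ : LieIdeal F L), (⊤ : LieIdeal F L)⁆)] :
    FiniteDimensional F (Submodule.span F {x : T | ∃ l : L, x = h l l}) := by
  obtain ⟨P, -⟩ := hh
  set I : LieIdeal F L := ⁅(⊤ : LieIdeal F L), (⊤ : LieIdeal F L)⁆ with hI
  -- the underlying submodule of `I` is the linear span of brackets
  have hspan : (LieSubmodule.toSubmodule I) =
      Submodule.span F {z : L | ∃ x y : L, ⁅x, y⁆ = z} := by
    rw [hI, LieSubmodule.lieIdeal_oper_eq_linear_span]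
    congr 1
    ext z
    constructor
    · rintro ⟨x, n, hz⟩; exact ⟨x, n, hz⟩
    · rintro ⟨x, y, hz⟩
      exact ⟨⟨x, LieSubmodule.mem_top x⟩, ⟨y, LieSubmodule.mem_top y⟩, hz⟩
  -- a finite spanning family of the abelianization, lifted to `L`
  obtain ⟨n, s, hs⟩ := Module.Finite.exists_fin (R := F) (M := L ⧸ I)
  set π : L →ₗ[F] L ⧸ I := (LieSubmodule.Quotient.mk' I).toLinearMap with hπ
  have hπsurj : Function.Surjective π := LieSubmodule.Quotient.surjective_mk' I
  choose e he using fun i => hπsurj (s i)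
  -- the bilinear map associated to `h`
  set B : L →ₗ[F] L →ₗ[F] T :=
    LinearMap.mk₂ F h P.add_left P.smul_left P.add_right P.smul_right with hB
  set g : Fin n × Fin n → T := fun p => h (e p.1) (e p.2) with hg
  have instW : FiniteDimensional F (Submodule.span F (Set.range g)) :=
    FiniteDimensional.span_of_finite F (Set.finite_range g)
  refine Submodule.finiteDimensional_of_le (S₂ := Submodule.span F (Set.range g)) ?_
  rw [Submodule.span_le]
  rintro x ⟨l, rfl⟩
  rw [SetLike.mem_coe]
  -- decompose `l = u + m` with `u` in the span of the `e i` and `m ∈ I`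
  have hl : π l ∈ Submodule.span F (Set.range s) := by rw [hs]; trivial
  rw [Submodule.mem_span_range_iff_exists_fun] at hl
  obtain ⟨c, hc⟩ := hl
  set u : L := ∑ i, c i • e i with hu
  have hmu : π u = π l := by
    rw [hu, map_sum]
    simp_rw [map_smul, he]
    exact hc
  have hm : l - u ∈ Submodule.span F {z : L | ∃ x y : L, ⁅x, y⁆ = z} := by
    rw [← hspan]
    have h0 : π (l - u) = 0 := by rw [map_sub, hmu, sub_self]
    exact (LieSubmodule.Quotient.mk_eq_zero I).mp h0
  -- h l l = h u u
  have key : h l l = h u u := by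
    have e0 : h l l = h (u + (l - u)) (u + (l - u)) := by
      rw [show u + (l - u) = l by abel]
    rw [e0, P.add_left, P.add_right, P.add_right]
    have s1 := LiePairingAux.sym_ideal P (l - u) hm u
    have s2 := LiePairingAux.q_ideal P (l - u) hm
    linear_combination (norm := abel) s1 + s2
  rw [key]
  -- expand `h u u` bilinearly
  have hBu : h u u = B u u := rfl
  rw [hBu, hu, map_sum]
  refine Submodule.sum_mem _ fun j _ => ?_
  rw [map_smul]
  refine Submodule.smul_mem _ _ ?_
  rw [map_sum, LinearMap.sum_apply]
  refine Submodule.sum_mem _ fun i _ => ?_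
  rw [map_smul, LinearMap.smul_apply]
  exact Submodule.smul_mem _ _ (Submodule.subset_span ⟨(i, j), rfl⟩)
end

section
/- Let L be a Lie algebra over a field such that the abelianization L/L² is finite-dimensional, and let h: L × L → L⊗L be a universal Lie pairing. Then the tensor center Z⊗(L) = {l ∈ L : l⊗l' = 0 for all l' ∈ L} is contained in the derived subalgebra L². -/
universe u v w x

/-! The pairings into an abelian Lie algebra that vanish as soon as one argument lies in `L²` are
exactly the bilinear maps on `L/L²`; all three Lie-pairing relations then hold trivially. If
`l ∉ L²`, a linear form `f` on `L` with `f(L²) = 0` and `f l ≠ 0` gives such a pairing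
`(x, y) ↦ f x * f y` with value `f l ^ 2 ≠ 0` at `(l, l)`. By universality it factors through
`l ⊗ l`, so `l ⊗ l ≠ 0`. -/

open Module

section LiePairing

variable {F : Type u} [Field F] {L : Type v} [LieRing L] [LieAlgebra F L]

theorem isLiePairing_of_lie_eq_zero {H : Type w} [LieRing H] [LieAlgebra F H] [IsLieAbelian H]
    (B : L →ₗ[F] L →ₗ[F] H) (hleft : ∀ x y z : L, B ⁅x, y⁆ z = 0)
    (hright : ∀ x y z : L, B z ⁅x, y⁆ = 0) : IsLiePairing F (fun x y => B x y) where
  add_left l l' k := by simp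
  add_right l k k' := by simp
  smul_left c l k := by simp
  smul_right c l k := by simp
  bracket_left l l' s := by simp [hleft, hright]
  bracket_right l s s' := by simp [hleft, hright]
  bracket_bracket l s l' s' := by simp [hleft, trivial_lie_zero]

attribute [local instance] LieRing.ofAssociativeRing in
theorem isLiePairing_mul_of_lie_eq_zero {A : Type w} [CommRing A] [Algebra F A]
    (f : L →ₗ[F] A) (hf : ∀ x y : L, f ⁅x, y⁆ = 0) : IsLiePairing F (fun x y => f x * f y) :=
  haveI : IsLieAbelian A := isMulCommutative_iff_isLieAbelian.mp inferInstance
  isLiePairing_of_lie_eq_zero ((LinearMap.mul F A).compl₁₂ f f) (by simp [hf]) (by simp [hf])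

theorem exists_dual_lie_eq_zero_of_notMem_derived {l : L}
    (hl : l ∉ ⁅(⊤ : LieIdeal F L), (⊤ : LieIdeal F L)⁆) :
    ∃ f : Dual F L, f l ≠ 0 ∧ ∀ x y : L, f ⁅x, y⁆ = 0 := by
  obtain ⟨f, hfl, hfmap⟩ := Submodule.exists_dual_map_eq_bot_of_notMem
    (p := (⁅(⊤ : LieIdeal F L), (⊤ : LieIdeal F L)⁆ : LieIdeal F L).toSubmodule) hl inferInstance
  refine ⟨f, hfl, fun x y => ?_⟩
  have hxy : ⁅x, y⁆ ∈ ⁅(⊤ : LieIdeal F L), (⊤ : LieIdeal F L)⁆ :=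
    LieSubmodule.lie_mem_lie (LieSubmodule.mem_top x) (LieSubmodule.mem_top y)
  simpa [hfmap] using Submodule.mem_map_of_mem (f := f) hxy

end LiePairing

theorem IsUniversalLiePairing.apply_eq_zero_of_apply_eq_zero {F : Type u} [Field F]
    {L : Type v} {T : Type w} [LieRing L] [LieAlgebra F L] [LieRing T] [LieAlgebra F T]
    {h : L → L → T} (hh : IsUniversalLiePairing F L T h) {Q : Type (max u v w)} [LieRing Q]
    [LieAlgebra F Q] {ρ : L → L → Q} (hρ : IsLiePairing F ρ) {x y : L} (hxy : h x y = 0) :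
    ρ x y = 0 := by
  obtain ⟨ζ, hζ, -⟩ := hh.universal Q ρ hρ
  rw [← hζ, hxy, map_zero]

theorem tensorCenter_le_derived_general (F : Type u) [Field F] (L : Type v) (T : Type w)
    [LieRing L] [LieAlgebra F L] [LieRing T] [LieAlgebra F T]
    (h : L → L → T) (hh : IsUniversalLiePairing F L T h) :
    ∀ l : L, (∀ l' : L, h l l' = 0) →
      l ∈ ⁅(⊤ : LieIdeal F L), (⊤ : LieIdeal F L)⁆ := by
  intro l hl
  by_contra hlI
  obtain ⟨f, hfl, hf⟩ := exists_dual_lie_eq_zero_of_notMem_derived hlI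
  -- `ULift`: universality only quantifies over targets in `Type (max u v w)`.
  let _ : LieRing (ULift.{max v w} F) := LieRing.ofAssociativeRing
  let g : L →ₗ[F] ULift.{max v w} F := ULift.moduleEquiv.symm.toLinearMap ∘ₗ f
  have hg : ∀ x y : L, g ⁅x, y⁆ = 0 := fun x y => by rw [LinearMap.comp_apply, hf, map_zero]
  have hgl : g l * g l = 0 :=
    hh.apply_eq_zero_of_apply_eq_zero (isLiePairing_mul_of_lie_eq_zero g hg) (hl l)
  exact hfl (ULift.moduleEquiv.symm.map_eq_zero_iff.mp (mul_self_eq_zero.mp hgl))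

/-- If `L/L²` is finite-dimensional then the tensor center
`Z⊗(L) = {l : l⊗l' = 0 for all l'}` is contained in the derived
subalgebra `L²`. -/
theorem tensorCenter_le_derived (F : Type u) [Field F] (L : Type v) (T : Type w)
    [LieRing L] [LieAlgebra F L] [LieRing T] [LieAlgebra F T]
    (h : L → L → T) (hh : IsUniversalLiePairing F L T h)
    [FiniteDimensional F (L ⧸ ⁅(⊤ : LieIdeal F L), (⊤ : LieIdeal F L)⁆)] :
    ∀ l : L, (∀ l' : L, h l l' = 0) →
      l ∈ ⁅(⊤ : LieIdeal F L), (⊤ : LieIdeal F L)⁆ :=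
  tensorCenter_le_derived_general F L T h hh
end

section
/- Let F be a Lie algebra over a field with Lie ideals R and S such that [S,F] ⊆ R. Then the map θ: F/S × F/S → F²/(R ∩ F²), θ(f+S, f₁+S) = [f,f₁] + (R ∩ F²), is well-defined and is a Lie pairing. -/
universe u v w x

/-- Let `G` be a Lie algebra with ideals `R`, `S` such that `[S,G] ⊆ R`, and
let `I` be the ideal `R ∩ G²` of the derived subalgebra `G²`. Then the map
`θ : G/S × G/S → G²/(R ∩ G²)`, `(f+S, f₁+S) ↦ [f,f₁] + (R ∩ G²)`, is
well-defined and is a Lie pairing. -/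
theorem theta_isLiePairing (K : Type u) [Field K] (G : Type v)
    [LieRing G] [LieAlgebra K G] (R S : LieIdeal K G)
    (hSF : ⁅S, (⊤ : LieIdeal K G)⁆ ≤ R)
    (I : LieIdeal K (⁅(⊤ : LieIdeal K G), (⊤ : LieIdeal K G)⁆ : LieIdeal K G))
    (hI : ∀ x : (⁅(⊤ : LieIdeal K G), (⊤ : LieIdeal K G)⁆ : LieIdeal K G),
      x ∈ I ↔ (x : G) ∈ R) :
    ∃ θ : (G ⧸ S) → (G ⧸ S) →
        ((⁅(⊤ : LieIdeal K G), (⊤ : LieIdeal K G)⁆ : LieIdeal K G) ⧸ I),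
      (∀ (f f₁ : G)
          (hmem : ⁅f, f₁⁆ ∈ ⁅(⊤ : LieIdeal K G), (⊤ : LieIdeal K G)⁆),
        θ (LieSubmodule.Quotient.mk (N := S) f)
            (LieSubmodule.Quotient.mk (N := S) f₁) =
          LieSubmodule.Quotient.mk (N := I) ⟨⁅f, f₁⁆, hmem⟩) ∧
      IsLiePairing K θ := by
  classical
  have hmemD : ∀ a b : G, ⁅a, b⁆ ∈ (⁅(⊤ : LieIdeal K G), (⊤ : LieIdeal K G)⁆ : LieIdeal K G) :=
    fun a b => LieSubmodule.lie_mem_lie (LieSubmodule.mem_top a) (LieSubmodule.mem_top b)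
  have hR : ∀ (s : G), s ∈ S → ∀ g : G, ⁅s, g⁆ ∈ R := fun s hs g =>
    hSF (LieSubmodule.lie_mem_lie hs (LieSubmodule.mem_top g))
  have hR' : ∀ (g : G) (s : G), s ∈ S → ⁅g, s⁆ ∈ R := by
    intro g s hs
    rw [← lie_skew]
    exact R.neg_mem (hR s hs g)
  have key : ∀ f f' f₁ f₁' : G,
      LieSubmodule.Quotient.mk (N := S) f = LieSubmodule.Quotient.mk (N := S) f' →
      LieSubmodule.Quotient.mk (N := S) f₁ = LieSubmodule.Quotient.mk (N := S) f₁' →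
      LieSubmodule.Quotient.mk (N := I) ⟨⁅f, f₁⁆, hmemD f f₁⟩ =
        LieSubmodule.Quotient.mk (N := I) ⟨⁅f', f₁'⁆, hmemD f' f₁'⟩ := by
    intro f f' f₁ f₁' h1 h2
    have hs1 : f - f' ∈ S := by
      rw [← LieSubmodule.mem_toSubmodule]; exact (Submodule.Quotient.eq _).mp h1
    have hs2 : f₁ - f₁' ∈ S := by
      rw [← LieSubmodule.mem_toSubmodule]; exact (Submodule.Quotient.eq _).mp h2
    apply (Submodule.Quotient.eq _).mpr
    rw [LieSubmodule.mem_toSubmodule, hI]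
    have : (⁅f, f₁⁆ : G) - ⁅f', f₁'⁆ = ⁅f - f', f₁⁆ + ⁅f', f₁ - f₁'⁆ := by
      rw [sub_lie, lie_sub]; abel
    show (⁅f, f₁⁆ : G) - ⁅f', f₁'⁆ ∈ R
    rw [this]
    exact R.add_mem (hR _ hs1 _) (hR' _ _ hs2)
  set θ : (G ⧸ S) → (G ⧸ S) →
      ((⁅(⊤ : LieIdeal K G), (⊤ : LieIdeal K G)⁆ : LieIdeal K G) ⧸ I) := fun x y =>
    LieSubmodule.Quotient.mk (N := I)
      ⟨⁅Quotient.out x, Quotient.out y⁆, hmemD _ _⟩ with hθdef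
  have hθ : ∀ f f₁ : G,
      θ (LieSubmodule.Quotient.mk (N := S) f) (LieSubmodule.Quotient.mk (N := S) f₁) =
        LieSubmodule.Quotient.mk (N := I) ⟨⁅f, f₁⁆, hmemD f f₁⟩ := by
    intro f f₁
    simp only [hθdef]
    exact key _ _ _ _ (Quotient.out_eq' _) (Quotient.out_eq' _)
  have hsurj : ∀ x : G ⧸ S, ∃ l : G, LieSubmodule.Quotient.mk (N := S) l = x :=
    fun x => ⟨Quotient.out x, Quotient.out_eq' x⟩
  have hmkadd : ∀ a b : G, (LieSubmodule.Quotient.mk (N := S) (a + b) : G ⧸ S) =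
      LieSubmodule.Quotient.mk (N := S) a + LieSubmodule.Quotient.mk (N := S) b := fun _ _ => rfl
  have hmksmul : ∀ (c : K) (a : G), (LieSubmodule.Quotient.mk (N := S) (c • a) : G ⧸ S) =
      c • LieSubmodule.Quotient.mk (N := S) a := fun _ _ => rfl
  have hmkbra : ∀ a b : G, (LieSubmodule.Quotient.mk (N := S) ⁅a, b⁆ : G ⧸ S) =
      ⁅LieSubmodule.Quotient.mk (N := S) a, LieSubmodule.Quotient.mk (N := S) b⁆ :=
    fun a b => LieSubmodule.Quotient.mk_bracket (I := S) a b
  have tadd : ∀ u v : (⁅(⊤ : LieIdeal K G), (⊤ : LieIdeal K G)⁆ : LieIdeal K G),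
      LieSubmodule.Quotient.mk (N := I) (u + v) =
        LieSubmodule.Quotient.mk (N := I) u + LieSubmodule.Quotient.mk (N := I) v :=
    fun _ _ => rfl
  have tsmul : ∀ (c : K) (u : (⁅(⊤ : LieIdeal K G), (⊤ : LieIdeal K G)⁆ : LieIdeal K G)),
      LieSubmodule.Quotient.mk (N := I) (c • u) =
        c • LieSubmodule.Quotient.mk (N := I) u := fun _ _ => rfl
  have tsub : ∀ u v : (⁅(⊤ : LieIdeal K G), (⊤ : LieIdeal K G)⁆ : LieIdeal K G),
      LieSubmodule.Quotient.mk (N := I) (u - v) =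
        LieSubmodule.Quotient.mk (N := I) u - LieSubmodule.Quotient.mk (N := I) v :=
    fun _ _ => rfl
  have tneg : ∀ u : (⁅(⊤ : LieIdeal K G), (⊤ : LieIdeal K G)⁆ : LieIdeal K G),
      LieSubmodule.Quotient.mk (N := I) (-u) =
        -LieSubmodule.Quotient.mk (N := I) u := fun _ => rfl
  have tbra : ∀ u v : (⁅(⊤ : LieIdeal K G), (⊤ : LieIdeal K G)⁆ : LieIdeal K G),
      LieSubmodule.Quotient.mk (N := I) ⁅u, v⁆ =
        ⁅LieSubmodule.Quotient.mk (N := I) u, LieSubmodule.Quotient.mk (N := I) v⁆ :=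
    fun u v => LieSubmodule.Quotient.mk_bracket (I := I) u v
  refine ⟨θ, fun f f₁ hmem => hθ f f₁, ?_⟩
  constructor
  · intro x y z
    obtain ⟨l, rfl⟩ := hsurj x; obtain ⟨l', rfl⟩ := hsurj y; obtain ⟨k, rfl⟩ := hsurj z
    rw [← hmkadd, hθ, hθ, hθ, ← tadd]
    exact congrArg _ (Subtype.ext (by simp [add_lie]))
  · intro x y z
    obtain ⟨l, rfl⟩ := hsurj x; obtain ⟨k, rfl⟩ := hsurj y; obtain ⟨k', rfl⟩ := hsurj z
    rw [← hmkadd, hθ, hθ, hθ, ← tadd]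
    exact congrArg _ (Subtype.ext (by simp [lie_add]))
  · intro c x y
    obtain ⟨l, rfl⟩ := hsurj x; obtain ⟨k, rfl⟩ := hsurj y
    rw [← hmksmul, hθ, hθ, ← tsmul]
    exact congrArg _ (Subtype.ext (by simp [smul_lie]))
  · intro c x y
    obtain ⟨l, rfl⟩ := hsurj x; obtain ⟨k, rfl⟩ := hsurj y
    rw [← hmksmul, hθ, hθ, ← tsmul]
    exact congrArg _ (Subtype.ext (by simp [lie_smul]))
  · intro x y z
    obtain ⟨l, rfl⟩ := hsurj x; obtain ⟨l', rfl⟩ := hsurj y; obtain ⟨s, rfl⟩ := hsurj z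
    rw [← hmkbra, ← hmkbra, ← hmkbra, hθ, hθ, hθ, ← tsub]
    refine congrArg _ (Subtype.ext ?_)
    show (⁅⁅l, l'⁆, s⁆ : G) = ↑(_ - _)
    simp only [AddSubgroupClass.coe_sub]
    exact lie_lie l l' s
  · intro x y z
    obtain ⟨l, rfl⟩ := hsurj x; obtain ⟨s, rfl⟩ := hsurj y; obtain ⟨s', rfl⟩ := hsurj z
    rw [← hmkbra, ← hmkbra, ← hmkbra, hθ, hθ, hθ, ← tsub]
    refine congrArg _ (Subtype.ext ?_)
    show (⁅l, ⁅s, s'⁆⁆ : G) = ↑(_ - _)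
    simp only [AddSubgroupClass.coe_sub]
    show (⁅l, ⁅s, s'⁆⁆ : G) = ⁅⁅s', l⁆, s⁆ - ⁅⁅s, l⁆, s'⁆
    rw [lie_lie, lie_lie, leibniz_lie l s' s, ← lie_skew s ⁅l, s'⁆]
    abel
  · intro x y x' y'
    obtain ⟨l, rfl⟩ := hsurj x; obtain ⟨s, rfl⟩ := hsurj y
    obtain ⟨l', rfl⟩ := hsurj x'; obtain ⟨s', rfl⟩ := hsurj y'
    rw [← hmkbra, ← hmkbra, hθ, hθ, hθ, ← tbra, ← tneg]
    refine congrArg _ (Subtype.ext ?_)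
    have hsl : (⁅s, l⁆ : G) = -⁅l, s⁆ := by
      rw [← neg_neg (⁅s, l⁆ : G), lie_skew]
    show (⁅⁅l, s⁆, ⁅l', s'⁆⁆ : G) = -(⁅(⟨⁅s, l⁆, hmemD s l⟩ : (⁅(⊤ : LieIdeal K G), (⊤ : LieIdeal K G)⁆ : LieIdeal K G)), ⟨⁅l', s'⁆, hmemD l' s'⟩⁆ : (⁅(⊤ : LieIdeal K G), (⊤ : LieIdeal K G)⁆ : LieIdeal K G))
    rw [show ((⁅(⟨⁅s, l⁆, hmemD s l⟩ : (⁅(⊤ : LieIdeal K G), (⊤ : LieIdeal K G)⁆ : LieIdeal K G)), ⟨⁅l', s'⁆, hmemD l' s'⟩⁆ : (⁅(⊤ : LieIdeal K G), (⊤ : LieIdeal K G)⁆ : LieIdeal K G)) : G) = ⁅(⁅s, l⁆ : G), (⁅l', s'⁆ : G)⁆ from rfl, hsl, neg_lie, neg_neg]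
end
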